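/- arXiv:1508.04874 — 12 statements merged into one kernel-verified Lean document; each statement's English description precedes it below -/
import Mathlib

section
/- The Lovász extension f̂ of a submodular function f is convex on the cube [0,1]^n, and its minimum value over [0,1]^n equals the minimum of f over all subsets of the ground set: min_{x∈[0,1]^n} f̂(x) = min_{S⊆V} f(S). -/
/-!
Fix an injective ranking `r` of the ground set and let `wᵢ = f(Bᵢ ∪ {i}) - f(Bᵢ)`, where `Bᵢ` is
the set of elements ranked below `i` (Edmonds' greedy vector). By diminishing returns,
`∑_{i ∈ A} wᵢ ≤ f(A)` for every `A`, with equality when `A` is an initial segment of the ranking.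
Applied to the superlevel sets `{i | t ≤ xᵢ}` and integrated over `t ∈ [0,1]`, this gives
`⟪w, x⟫ ≤ f̂(x)` on the cube, with equality when `r` sorts `x` decreasingly. So at every point of
the cube `f̂` is touched from below by a linear function, which makes it convex. Finally
`f̂(x) ≥ min f` because the integrand is, and `f̂(𝟙_S) = f(S)`.
-/

open MeasureTheory

/-- The Lovász extension of a set function `f` on the ground set `Fin n`:
`f̂(x) = ∫₀¹ f({i : xᵢ ≥ t}) dt`. -/
noncomputable def lovasz (n : ℕ) (f : Finset (Fin n) → ℝ) (x : Fin n → ℝ) : ℝ :=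
  ∫ t in (0:ℝ)..1, f (Finset.univ.filter fun i => t ≤ x i)

open Finset

section Submodular

variable {ι : Type*} [DecidableEq ι]

def IsSubmodular (f : Finset ι → ℝ) : Prop :=
  ∀ A B : Finset ι, f (A ∪ B) + f (A ∩ B) ≤ f A + f B

theorem IsSubmodular.insert_sub_le {f : Finset ι → ℝ} (hf : IsSubmodular f) {A B : Finset ι}
    (hAB : A ⊆ B) {a : ι} (ha : a ∉ B) :
    f (insert a B) - f B ≤ f (insert a A) - f A := by
  have hunion : insert a A ∪ B = insert a B := by
    rw [insert_union, union_eq_right.mpr hAB]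
  have hinter : insert a A ∩ B = A := by
    rw [insert_inter_of_notMem ha, inter_eq_left.mpr hAB]
  have := hf (insert a A) B
  rw [hunion, hinter] at this
  linarith

end Submodular

section Greedy

variable {ι κ : Type*} [Fintype ι] [LinearOrder κ] {r : ι → κ}

def rankBelow (r : ι → κ) (i : ι) : Finset ι := univ.filter fun j => r j < r i

theorem subset_rankBelow_of_insert (hr : Function.Injective r) {a : ι} {A : Finset ι}
    (ha : a ∉ A) (hmax : ∀ x ∈ A, r x ≤ r a) : A ⊆ rankBelow r a := fun x hx =>
  mem_filter.mpr ⟨mem_univ x, (hmax x hx).lt_of_ne (hr.ne (ne_of_mem_of_not_mem hx ha))⟩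

theorem notMem_rankBelow_self (a : ι) : a ∉ rankBelow r a := by simp [rankBelow]

variable [DecidableEq ι]

def greedyVertex (f : Finset ι → ℝ) (r : ι → κ) (i : ι) : ℝ :=
  f (insert i (rankBelow r i)) - f (rankBelow r i)

variable {f : Finset ι → ℝ}

theorem IsSubmodular.sum_greedyVertex_le (hf : IsSubmodular f) (hf0 : f ∅ = 0)
    (hr : Function.Injective r) (A : Finset ι) : ∑ i ∈ A, greedyVertex f r i ≤ f A := by
  induction A using Finset.induction_on_max_value r with
  | empty => simp [hf0]
  | insert a A ha hmax ih =>
    rw [sum_insert ha]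
    have := hf.insert_sub_le (subset_rankBelow_of_insert hr ha hmax) (notMem_rankBelow_self a)
    rw [greedyVertex]
    linarith

theorem sum_greedyVertex_of_lowerSet (hf0 : f ∅ = 0) (hr : Function.Injective r)
    (A : Finset ι) (hA : ∀ i ∈ A, ∀ j, r j < r i → j ∈ A) :
    ∑ i ∈ A, greedyVertex f r i = f A := by
  induction A using Finset.induction_on_max_value r with
  | empty => simp [hf0]
  | insert a A ha hmax ih =>
    have hbelow : rankBelow r a = A := by
      refine (subset_rankBelow_of_insert hr ha hmax).antisymm' fun j hj => ?_
      have hj' := (mem_filter.mp hj).2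
      exact (mem_insert.mp (hA a (mem_insert_self a A) j hj')).resolve_left
        (ne_of_mem_of_not_mem hj (notMem_rankBelow_self a))
    have hA' : ∀ i ∈ A, ∀ j, r j < r i → j ∈ A := fun i hi j hji =>
      (mem_insert.mp (hA i (mem_insert_of_mem hi) j hji)).resolve_left
        fun hja => (hji.trans_le (hmax i hi)).ne (congrArg r hja)
    rw [sum_insert ha, ih hA', greedyVertex, hbelow]
    ring

end Greedy

theorem exists_injective_rank_antitone {n : ℕ} (x : Fin n → ℝ) :
    ∃ r : Fin n → Fin n, Function.Injective r ∧ ∀ i j, r j < r i → x i ≤ x j := by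
  set σ := Tuple.sort (-x)
  refine ⟨σ.symm, σ.symm.injective, fun i j hji => ?_⟩
  have := Tuple.monotone_sort (-x) hji.le
  simpa [Function.comp_apply, σ] using this

theorem intervalIntegrable_ite_le (c d : ℝ) :
    IntervalIntegrable (fun t => if t ≤ c then d else 0) volume 0 1 := by
  simp_rw [← Set.mem_Iic, ← Set.indicator_apply (Set.Iic c) fun _ => d]
  rw [intervalIntegrable_iff]
  exact integrableOn_const (by simp) |>.indicator measurableSet_Iic

theorem integral_ite_le {c : ℝ} (hc : c ∈ Set.Icc (0 : ℝ) 1) (d : ℝ) :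
    ∫ t in (0 : ℝ)..1, (if t ≤ c then d else 0) = c * d := by
  simp_rw [← Set.mem_Iic, ← Set.indicator_apply (Set.Iic c) fun _ => d]
  rw [intervalIntegral.integral_of_le zero_le_one, integral_indicator_const _ measurableSet_Iic,
    measureReal_restrict_apply measurableSet_Iic, Set.Iic_inter_Ioc_of_le hc.2,
    Real.volume_real_Ioc_of_le hc.1, sub_zero, smul_eq_mul]

section Lovasz

variable {n : ℕ} {κ : Type*} [LinearOrder κ] {f : Finset (Fin n) → ℝ} {r : Fin n → κ}

theorem superlevel_eq_sum_greedyVertex (hf0 : f ∅ = 0) (hr : Function.Injective r)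
    {x : Fin n → ℝ} (hxr : ∀ i j, r j < r i → x i ≤ x j) (t : ℝ) :
    f (univ.filter fun i => t ≤ x i) = ∑ i, if t ≤ x i then greedyVertex f r i else 0 := by
  rw [← sum_filter, sum_greedyVertex_of_lowerSet hf0 hr]
  intro i hi j hji
  simp only [mem_filter, mem_univ, true_and] at hi ⊢
  exact hi.trans (hxr i j hji)

theorem IsSubmodular.sum_ite_greedyVertex_le (hf : IsSubmodular f) (hf0 : f ∅ = 0)
    (hr : Function.Injective r) (x : Fin n → ℝ) (t : ℝ) :
    ∑ i, (if t ≤ x i then greedyVertex f r i else 0) ≤ f (univ.filter fun i => t ≤ x i) := by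
  rw [← sum_filter]
  exact hf.sum_greedyVertex_le hf0 hr _

theorem intervalIntegrable_sum_ite_le (w x : Fin n → ℝ) :
    IntervalIntegrable (fun t => ∑ i, if t ≤ x i then w i else 0) volume 0 1 := by
  have := IntervalIntegrable.sum univ fun i _ => intervalIntegrable_ite_le (x i) (w i)
  rwa [sum_fn] at this

theorem integral_sum_ite_le (w : Fin n → ℝ) {x : Fin n → ℝ} (hx : x ∈ Set.Icc 0 1) :
    ∫ t in (0 : ℝ)..1, ∑ i, (if t ≤ x i then w i else 0) = ∑ i, x i * w i := by
  rw [intervalIntegral.integral_finsetSum fun i _ => intervalIntegrable_ite_le (x i) (w i)]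
  exact sum_congr rfl fun i _ => integral_ite_le ⟨hx.1 i, hx.2 i⟩ (w i)

theorem intervalIntegrable_lovasz_integrand (hf0 : f ∅ = 0) (x : Fin n → ℝ) :
    IntervalIntegrable (fun t => f (univ.filter fun i => t ≤ x i)) volume 0 1 := by
  obtain ⟨r, hr, hxr⟩ := exists_injective_rank_antitone x
  simp_rw [superlevel_eq_sum_greedyVertex hf0 hr hxr]
  exact intervalIntegrable_sum_ite_le _ x

theorem IsSubmodular.sum_mul_greedyVertex_le_lovasz (hf : IsSubmodular f) (hf0 : f ∅ = 0)
    (hr : Function.Injective r) {x : Fin n → ℝ} (hx : x ∈ Set.Icc 0 1) :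
    ∑ i, x i * greedyVertex f r i ≤ lovasz n f x := by
  rw [← integral_sum_ite_le _ hx]
  exact intervalIntegral.integral_mono_on zero_le_one (intervalIntegrable_sum_ite_le _ x)
    (intervalIntegrable_lovasz_integrand hf0 x) fun t _ => hf.sum_ite_greedyVertex_le hf0 hr x t

theorem lovasz_eq_sum_mul_greedyVertex (hf0 : f ∅ = 0) (hr : Function.Injective r)
    {x : Fin n → ℝ} (hxr : ∀ i j, r j < r i → x i ≤ x j) (hx : x ∈ Set.Icc 0 1) :
    lovasz n f x = ∑ i, x i * greedyVertex f r i := by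
  rw [← integral_sum_ite_le _ hx, lovasz]
  simp_rw [superlevel_eq_sum_greedyVertex hf0 hr hxr]

theorem IsSubmodular.convexOn_lovasz (hf : IsSubmodular f) (hf0 : f ∅ = 0) :
    ConvexOn ℝ (Set.Icc 0 1) (lovasz n f) := by
  refine ⟨convex_Icc 0 1, fun x hx y hy a b ha hb hab => ?_⟩
  obtain ⟨r, hr, hzr⟩ := exists_injective_rank_antitone (a • x + b • y)
  calc lovasz n f (a • x + b • y)
      = ∑ i, (a • x + b • y) i * greedyVertex f r i :=
        lovasz_eq_sum_mul_greedyVertex hf0 hr hzr (convex_Icc 0 1 hx hy ha hb hab)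
    _ = a * ∑ i, x i * greedyVertex f r i + b * ∑ i, y i * greedyVertex f r i := by
        simp only [mul_sum, ← sum_add_distrib, Pi.add_apply, Pi.smul_apply, smul_eq_mul]
        exact sum_congr rfl fun i _ => by ring
    _ ≤ a * lovasz n f x + b * lovasz n f y := by
        gcongr
        · exact hf.sum_mul_greedyVertex_le_lovasz hf0 hr hx
        · exact hf.sum_mul_greedyVertex_le_lovasz hf0 hr hy

theorem lovasz_indicator (S : Finset (Fin n)) :
    lovasz n f (fun i => if i ∈ S then 1 else 0) = f S := by
  have hlevel : ∀ t ∈ Set.Ioc (0 : ℝ) 1,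
      f (univ.filter fun i => t ≤ if i ∈ S then 1 else 0) = f S := by
    intro t ht
    congr 1
    ext i
    by_cases hi : i ∈ S <;> simp [hi, ht.1, ht.2]
  rw [lovasz, intervalIntegral.integral_of_le zero_le_one,
    setIntegral_congr_fun measurableSet_Ioc hlevel]
  simp

theorem le_lovasz_of_forall_le (hf0 : f ∅ = 0) {c : ℝ} (hc : ∀ S, c ≤ f S) (x : Fin n → ℝ) :
    c ≤ lovasz n f x := by
  simpa [lovasz] using intervalIntegral.integral_mono_on zero_le_one intervalIntegrable_const
    (intervalIntegrable_lovasz_integrand hf0 x) fun t _ => hc _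

theorem isLeast_lovasz_image (hf0 : f ∅ = 0) {S : Finset (Fin n)} (hS : ∀ T, f S ≤ f T) :
    IsLeast (lovasz n f '' Set.Icc 0 1) (f S) := by
  refine ⟨⟨fun i => if i ∈ S then 1 else 0, ⟨fun i => ?_, fun i => ?_⟩, lovasz_indicator S⟩, ?_⟩
  · by_cases hi : i ∈ S <;> simp [hi]
  · by_cases hi : i ∈ S <;> simp [hi]
  · rintro _ ⟨x, -, rfl⟩
    exact le_lovasz_of_forall_le hf0 hS x

end Lovasz

theorem stmt0_general (n : ℕ) (f : Finset (Fin n) → ℝ)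
    (hsub : ∀ A B : Finset (Fin n), f (A ∪ B) + f (A ∩ B) ≤ f A + f B)
    (hf0 : f ∅ = 0) :
    ConvexOn ℝ (Set.Icc (0 : Fin n → ℝ) 1) (lovasz n f) ∧
      sInf (lovasz n f '' Set.Icc (0 : Fin n → ℝ) 1) =
        sInf (Set.range fun S : Finset (Fin n) => f S) := by
  obtain ⟨S, hS⟩ := Finite.exists_min f
  refine ⟨IsSubmodular.convexOn_lovasz hsub hf0, ?_⟩
  rw [(isLeast_lovasz_image hf0 hS).csInf_eq]
  exact (IsLeast.csInf_eq (s := Set.range f) ⟨⟨S, rfl⟩, Set.forall_mem_range.mpr hS⟩).symm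

/-- The Lovász extension of a submodular function `f` with `f ∅ = 0` is convex on the cube
`[0,1]^n`, and its minimum value over the cube equals the minimum of `f` over all subsets. -/
theorem stmt0 (n : ℕ) (hn : 1 ≤ n) (f : Finset (Fin n) → ℝ)
    (hsub : ∀ A B : Finset (Fin n), f (A ∪ B) + f (A ∩ B) ≤ f A + f B)
    (hf0 : f ∅ = 0) :
    ConvexOn ℝ (Set.Icc (0 : Fin n → ℝ) 1) (lovasz n f) ∧
      sInf (lovasz n f '' Set.Icc (0 : Fin n → ℝ) 1) =
        sInf (Set.range fun S : Finset (Fin n) => f S) :=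
  stmt0_general n f hsub hf0
end

section
/- For every permutation v₁,…,vₙ of V, the associated greedy vector h lies in the base polyhedron of f: Σ_{i∈S} h_i ≤ f(S) for every subset S ⊆ V, and Σ_{i∈V} h_i = f(V). -/
/-- The greedy vector associated with a permutation `v` of the ground set `Fin n`:
its value at the element `v i` is `f({v 0, …, v i}) − f({v 0, …, v (i-1)})`. -/
noncomputable def greedyVec (n : ℕ) (f : Finset (Fin n) → ℝ) (v : Equiv.Perm (Fin n)) :
    Fin n → ℝ :=
  fun j => f ((Finset.Iic (v.symm j)).image v) - f ((Finset.Iio (v.symm j)).image v)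

/-- For every permutation of the ground set, the associated greedy vector `h` lies in the
base polyhedron of the submodular function `f`: `Σ_{i∈S} hᵢ ≤ f(S)` for all `S ⊆ V`, and
`Σ_{i∈V} hᵢ = f(V)`. -/
theorem stmt2 (n : ℕ) (hn : 1 ≤ n) (f : Finset (Fin n) → ℝ)
    (hsub : ∀ A B : Finset (Fin n), f (A ∪ B) + f (A ∩ B) ≤ f A + f B)
    (hf0 : f ∅ = 0) (v : Equiv.Perm (Fin n)) :
    (∀ S : Finset (Fin n), ∑ i ∈ S, greedyVec n f v i ≤ f S) ∧
      ∑ i : Fin n, greedyVec n f v i = f Finset.univ := by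
  classical
  set h := greedyVec n f v with hh
  -- key inequality by induction on prefixes
  have key : ∀ (S : Finset (Fin n)) (m : ℕ),
      ∑ i ∈ S.filter (fun i => ((v.symm i : Fin n) : ℕ) < m), h i
        ≤ f (S.filter (fun i => ((v.symm i : Fin n) : ℕ) < m)) := by
    intro S m
    induction m with
    | zero => simp [hf0]
    | succ m ih =>
      by_cases hm : m < n
      · set k : Fin n := ⟨m, hm⟩ with hk
        set e := v k with he'
        have hvek : v.symm e = k := by simp [he']
        by_cases he : e ∈ S
        · have hTsub : S.filter (fun i => ((v.symm i : Fin n) : ℕ) < m)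
              ⊆ (Finset.Iio k).image v := by
            intro i hi
            simp only [Finset.mem_filter] at hi
            refine Finset.mem_image.2 ⟨v.symm i, ?_, by simp⟩
            simp only [Finset.mem_Iio]
            exact Fin.lt_def.2 hi.2
          have heB : e ∉ (Finset.Iio k).image v := by
            intro hmem
            obtain ⟨j, hj, hje⟩ := Finset.mem_image.1 hmem
            simp only [Finset.mem_Iio] at hj
            have : j = k := v.injective (by rw [hje, he'])
            exact absurd (this ▸ hj) (lt_irrefl k)
          have heT : e ∉ S.filter (fun i => ((v.symm i : Fin n) : ℕ) < m) := by
            simp [hvek, hk]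
          have hfilter : S.filter (fun i => ((v.symm i : Fin n) : ℕ) < m + 1)
              = insert e (S.filter (fun i => ((v.symm i : Fin n) : ℕ) < m)) := by
            ext i
            simp only [Finset.mem_filter, Finset.mem_insert]
            constructor
            · rintro ⟨hiS, hlt⟩
              rcases Nat.lt_succ_iff_lt_or_eq.1 hlt with h1 | h1
              · exact Or.inr ⟨hiS, h1⟩
              · left
                have hik : v.symm i = k := Fin.ext h1
                rw [he', ← hik]
                exact (v.apply_symm_apply i).symm
            · rintro (rfl | ⟨hiS, hlt⟩)
              · exact ⟨he, by simp [hvek, hk]⟩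
              · exact ⟨hiS, Nat.lt_succ_of_lt hlt⟩
          set T := S.filter (fun i => ((v.symm i : Fin n) : ℕ) < m) with hT
          have hIic : Finset.Iic k = insert k (Finset.Iio k) := (Finset.Iio_insert k).symm
          have hunion : insert e T ∪ (Finset.Iio k).image v
              = (Finset.Iic k).image v := by
            rw [hIic, Finset.image_insert]
            rw [Finset.insert_union]
            congr 1
            exact Finset.union_eq_right.2 hTsub
          have hinter : insert e T ∩ (Finset.Iio k).image v = T := by
            rw [Finset.insert_inter_of_notMem heB]
            exact Finset.inter_eq_left.2 hTsub
          have hsm := hsub (insert e T) ((Finset.Iio k).image v)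
          rw [hunion, hinter] at hsm
          have hsum : ∑ i ∈ insert e T, h i = h e + ∑ i ∈ T, h i :=
            Finset.sum_insert heT
          have hhe : h e = f ((Finset.Iic k).image v) - f ((Finset.Iio k).image v) := by
            simp [hh, greedyVec, hvek]
          rw [hfilter, hsum]
          linarith
        · have hfilter : S.filter (fun i => ((v.symm i : Fin n) : ℕ) < m + 1)
              = S.filter (fun i => ((v.symm i : Fin n) : ℕ) < m) := by
            ext i
            simp only [Finset.mem_filter]
            constructor
            · rintro ⟨hiS, hlt⟩
              refine ⟨hiS, ?_⟩
              rcases Nat.lt_succ_iff_lt_or_eq.1 hlt with h1 | h1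
              · exact h1
              · exfalso
                have : v.symm i = k := Fin.ext h1
                have : i = e := by rw [he', ← this]; simp
                exact he (this ▸ hiS)
            · rintro ⟨hiS, hlt⟩
              exact ⟨hiS, Nat.lt_succ_of_lt hlt⟩
          rw [hfilter]; exact ih
      · have hfilter : S.filter (fun i => ((v.symm i : Fin n) : ℕ) < m + 1)
            = S.filter (fun i => ((v.symm i : Fin n) : ℕ) < m) := by
          ext i
          simp only [Finset.mem_filter]
          have h1 : ((v.symm i : Fin n) : ℕ) < n := (v.symm i).is_lt
          constructor
          · rintro ⟨hiS, _⟩; exact ⟨hiS, lt_of_lt_of_le h1 (le_of_not_gt hm)⟩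
          · rintro ⟨hiS, hlt⟩; exact ⟨hiS, Nat.lt_succ_of_lt hlt⟩
        rw [hfilter]; exact ih
  constructor
  · intro S
    have := key S n
    have hS : S.filter (fun i => ((v.symm i : Fin n) : ℕ) < n) = S :=
      Finset.filter_true_of_mem (fun i _ => (v.symm i).is_lt)
    rwa [hS] at this
  · -- telescoping
    have h1 : ∑ i : Fin n, h i = ∑ k : Fin n, h (v k) :=
      (Equiv.sum_comp v h).symm
    have h2 : ∀ k : Fin n, h (v k)
        = f ((Finset.Iic k).image v) - f ((Finset.Iio k).image v) := by
      intro k; simp [hh, greedyVec]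
    set G : ℕ → ℝ := fun m =>
      f ((Finset.univ.filter (fun j : Fin n => (j : ℕ) < m)).image v) with hG
    have h3 : ∀ k : Fin n, h (v k) = G ((k : ℕ) + 1) - G (k : ℕ) := by
      intro k
      rw [h2 k]
      have e1 : Finset.Iic k = Finset.univ.filter (fun j : Fin n => (j : ℕ) < (k : ℕ) + 1) := by
        ext j
        simp only [Finset.mem_Iic, Finset.mem_filter, Finset.mem_univ, true_and, Fin.le_def]
        omega
      have e2 : Finset.Iio k = Finset.univ.filter (fun j : Fin n => (j : ℕ) < (k : ℕ)) := by
        ext j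
        simp only [Finset.mem_Iio, Finset.mem_filter, Finset.mem_univ, true_and, Fin.lt_def]
      rw [e1, e2]
    calc ∑ i : Fin n, h i = ∑ k : Fin n, (G ((k : ℕ) + 1) - G (k : ℕ)) := by
          rw [h1]; exact Finset.sum_congr rfl (fun k _ => h3 k)
      _ = ∑ m ∈ Finset.range n, (G (m + 1) - G m) :=
          Fin.sum_univ_eq_sum_range (fun m => G (m + 1) - G m) n
      _ = G n - G 0 := Finset.sum_range_sub G n
      _ = f Finset.univ := by
          have hGn : G n = f Finset.univ := by
            have : Finset.univ.filter (fun j : Fin n => (j : ℕ) < n) = Finset.univ :=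
              Finset.filter_true_of_mem (fun j _ => j.is_lt)
            simp [hG, this]
          have hG0 : G 0 = 0 := by simp [hG, hf0]
          rw [hGn, hG0, sub_zero]
end

section
/- For every permutation v₁,…,vₙ of V with associated greedy vector h, and for every x ∈ [0,1]^n, one has ⟨h, x⟩ = Σ_{i=1}^n h_i x_i ≤ f̂(x). In particular, the hyperplane ⟨h, x⟩ ≤ f̂(x̄) through a query point x̄ (ordered so that x̄_{v_1} ≥ ⋯ ≥ x̄_{v_n}) does not cut away any minimizer of f̂ over [0,1]^n. -/
open MeasureTheory

/-!
The greedy vector `h` lies in the submodular polyhedron: `∑_{j ∈ S} h_j ≤ f(S)` for every `S`.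
Adding the elements of `S` in the order `v`, each contributes to `f` at least its greedy
increment, by diminishing returns. Integrating this over the superlevel sets
`S_t = {i : t ≤ x_i}` gives `⟨h, x⟩ = ∫₀¹ ∑_{i ∈ S_t} h_i dt ≤ ∫₀¹ f(S_t) dt = f̂(x)`.
-/

open Finset

lemma sub_le_sub_of_submodular {α : Type*} [DecidableEq α] {f : Finset α → ℝ}
    (hsub : ∀ A B : Finset α, f (A ∪ B) + f (A ∩ B) ≤ f A + f B) {s t : Finset α} {a : α}
    (hst : s ⊆ t) (ha : a ∉ t) : f (insert a t) - f t ≤ f (insert a s) - f s := by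
  have hunion : t ∪ insert a s = insert a t := by
    rw [union_insert, union_eq_left.mpr hst]
  have hinter : t ∩ insert a s = s := by
    rw [inter_insert_of_notMem ha, inter_eq_right.mpr hst]
  linarith [hunion ▸ hinter ▸ hsub t (insert a s)]

section Greedy

variable {n : ℕ} {f : Finset (Fin n) → ℝ}

lemma greedyVec_eq_sub (f : Finset (Fin n) → ℝ) (v : Equiv.Perm (Fin n)) (a : Fin n) :
    greedyVec n f v a =
      f (insert a ((Iio (v.symm a)).image v)) - f ((Iio (v.symm a)).image v) := by
  rw [greedyVec, ← Iio_insert, image_insert, Equiv.apply_symm_apply]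

lemma sum_greedyVec_le (hsub : ∀ A B : Finset (Fin n), f (A ∪ B) + f (A ∩ B) ≤ f A + f B)
    (hf0 : f ∅ = 0) (v : Equiv.Perm (Fin n)) (S : Finset (Fin n)) :
    ∑ j ∈ S, greedyVec n f v j ≤ f S := by
  induction S using Finset.induction_on_max_value v.symm with
  | empty => simp [hf0]
  | insert a s has hmax ih =>
    have hs : s ⊆ (Iio (v.symm a)).image v := fun j hj => by
      have hja : v.symm j ≠ v.symm a := by simpa using ne_of_mem_of_not_mem hj has
      exact mem_image.mpr
        ⟨v.symm j, mem_Iio.mpr ((hmax j hj).lt_of_ne hja), v.apply_symm_apply j⟩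
    have ha : a ∉ (Iio (v.symm a)).image v := by
      simp only [mem_image, mem_Iio, not_exists, not_and]
      exact fun b hb hba => hb.ne (by simp [← hba])
    rw [sum_insert has, greedyVec_eq_sub]
    linarith [sub_le_sub_of_submodular hsub hs ha]

end Greedy

section Superlevel

variable {ι : Type*} [Fintype ι]

lemma intervalIntegrable_comp_superlevel (g : Finset ι → ℝ) (x : ι → ℝ) (a b : ℝ) :
    IntervalIntegrable (fun t => g (univ.filter fun i => t ≤ x i)) volume a b := by
  classical
  have hmeas : Measurable fun t => g (univ.filter fun i => t ≤ x i) := by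
    have hcomp : (fun t => g (univ.filter fun i => t ≤ x i)) =
        (fun p : ι → Prop => g (univ.filter p)) ∘ fun t i => t ≤ x i := by
      funext t; simp
    rw [hcomp]
    exact (measurable_of_countable _).comp
      (measurable_pi_iff.mpr fun i => measurableSet_setOfPred.mp measurableSet_Iic)
  obtain ⟨M, hM⟩ := (Set.finite_range fun S => ‖g S‖).bddAbove
  rw [intervalIntegrable_iff]
  exact Measure.integrableOn_of_bounded measure_Ioc_lt_top.ne hmeas.aestronglyMeasurable
    (M := M) (.of_forall fun t => hM ⟨_, rfl⟩)

lemma integral_sum_superlevel (w x : ι → ℝ) (hx : x ∈ Set.Icc 0 1) :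
    ∫ t in (0:ℝ)..1, ∑ i ∈ univ.filter (fun i => t ≤ x i), w i = ∑ i, w i * x i := by
  classical
  simp_rw [sum_filter]
  rw [intervalIntegral.integral_finsetSum fun i _ => by
    simpa using intervalIntegrable_comp_superlevel (fun S => if i ∈ S then w i else 0) x 0 1]
  refine sum_congr rfl fun i _ => ?_
  have := intervalIntegral.integral_indicator (μ := volume) (f := fun _ => w i)
    (a₁ := 0) (a₃ := 1) ⟨hx.1 i, hx.2 i⟩
  simp only [Set.indicator_apply, Set.mem_ofPred_eq, intervalIntegral.integral_const] at this
  simpa [mul_comm] using this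

end Superlevel

lemma sum_mul_le_lovasz {n : ℕ} {f : Finset (Fin n) → ℝ} {w : Fin n → ℝ}
    (hw : ∀ S, ∑ i ∈ S, w i ≤ f S) {x : Fin n → ℝ} (hx : x ∈ Set.Icc 0 1) :
    ∑ i, w i * x i ≤ lovasz n f x := by
  rw [← integral_sum_superlevel w x hx, lovasz]
  exact intervalIntegral.integral_mono_on zero_le_one
    (intervalIntegrable_comp_superlevel (fun S => ∑ i ∈ S, w i) x 0 1)
    (intervalIntegrable_comp_superlevel f x 0 1) fun t _ => hw _

theorem stmt3_general (n : ℕ) (f : Finset (Fin n) → ℝ)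
    (hsub : ∀ A B : Finset (Fin n), f (A ∪ B) + f (A ∩ B) ≤ f A + f B)
    (hf0 : f ∅ = 0) (v : Equiv.Perm (Fin n)) :
    (∀ x ∈ Set.Icc (0 : Fin n → ℝ) 1,
        ∑ i : Fin n, greedyVec n f v i * x i ≤ lovasz n f x) ∧
      ∀ xbar ∈ Set.Icc (0 : Fin n → ℝ) 1,
        (∀ i j : Fin n, i ≤ j → xbar (v j) ≤ xbar (v i)) →
        ∀ y ∈ Set.Icc (0 : Fin n → ℝ) 1,
          (∀ z ∈ Set.Icc (0 : Fin n → ℝ) 1, lovasz n f y ≤ lovasz n f z) →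
          ∑ i : Fin n, greedyVec n f v i * y i ≤ lovasz n f xbar := by
  have hbound := fun x (hx : x ∈ Set.Icc (0 : Fin n → ℝ) 1) =>
    sum_mul_le_lovasz (sum_greedyVec_le hsub hf0 v) hx
  exact ⟨hbound, fun xbar hxbar _ y hy hmin => (hbound y hy).trans (hmin xbar hxbar)⟩

/-- For every permutation `v` with greedy vector `h`, and every `x ∈ [0,1]^n`,
`⟨h, x⟩ ≤ f̂(x)`.  In particular, given a query point `x̄ ∈ [0,1]^n` sorted so that
`x̄_{v 0} ≥ ⋯ ≥ x̄_{v (n-1)}`, the hyperplane `⟨h, x⟩ ≤ f̂(x̄)` does not cut away any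
minimizer `y` of `f̂` over `[0,1]^n`. -/
theorem stmt3 (n : ℕ) (hn : 1 ≤ n) (f : Finset (Fin n) → ℝ)
    (hsub : ∀ A B : Finset (Fin n), f (A ∪ B) + f (A ∩ B) ≤ f A + f B)
    (hf0 : f ∅ = 0) (v : Equiv.Perm (Fin n)) :
    (∀ x ∈ Set.Icc (0 : Fin n → ℝ) 1,
        ∑ i : Fin n, greedyVec n f v i * x i ≤ lovasz n f x) ∧
      ∀ xbar ∈ Set.Icc (0 : Fin n → ℝ) 1,
        (∀ i j : Fin n, i ≤ j → xbar (v j) ≤ xbar (v i)) →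
        ∀ y ∈ Set.Icc (0 : Fin n → ℝ) 1,
          (∀ z ∈ Set.Icc (0 : Fin n → ℝ) 1, lovasz n f y ≤ lovasz n f z) →
          ∑ i : Fin n, greedyVec n f v i * y i ≤ lovasz n f xbar :=
  stmt3_general n f hsub hf0 v
end

section
/- Let y ∈ B(f) with max_j y_j ≥ 0. If an element i satisfies y_i < −(n−1)·max_j y_j, then f(S) > f(V) for every subset S ⊆ V not containing i; in particular, every minimizer of f contains i. -/
/-- Let `y ∈ B(f)` with `m = max_j y_j ≥ 0`.  If `y i < −(n−1)·m`, then `f(S) > f(V)`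
for every `S` not containing `i`; in particular every minimizer of `f` contains `i`. -/
theorem stmt6 (n : ℕ) (hn : 1 ≤ n) (f : Finset (Fin n) → ℝ)
    (hsub : ∀ A B : Finset (Fin n), f (A ∪ B) + f (A ∩ B) ≤ f A + f B)
    (hf0 : f ∅ = 0) (y : Fin n → ℝ)
    (hyle : ∀ S : Finset (Fin n), ∑ i ∈ S, y i ≤ f S)
    (hyV : ∑ i : Fin n, y i = f Finset.univ)
    (m : ℝ) (hm : IsGreatest (Set.range y) m) (hm0 : 0 ≤ m)
    (i : Fin n) (hyi : y i < -((n : ℝ) - 1) * m) :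
    ∀ S : Finset (Fin n), i ∉ S → f Finset.univ < f S := by
  intro S hiS
  have hcompl : i ∈ Sᶜ := Finset.mem_compl.mpr hiS
  have hym : ∀ j, y j ≤ m := fun j => hm.2 ⟨j, rfl⟩
  -- bound the sum over Sᶜ \ {i}
  have hsub1 : ({i} : Finset (Fin n)) ⊆ Sᶜ := by
    simpa using hcompl
  have hcard : ((Sᶜ \ {i}).card : ℝ) ≤ (n : ℝ) - 1 := by
    have h1 : (Sᶜ \ {i}).card = Sᶜ.card - 1 := by
      rw [Finset.card_sdiff_of_subset hsub1, Finset.card_singleton]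
    have h2 : Sᶜ.card ≤ n := by
      simpa using Finset.card_le_card (Finset.subset_univ Sᶜ)
    have h3 : (Sᶜ \ {i}).card ≤ n - 1 := by omega
    calc ((Sᶜ \ {i}).card : ℝ) ≤ ((n - 1 : ℕ) : ℝ) := by exact_mod_cast h3
      _ = (n : ℝ) - 1 := by
          have : (1 : ℕ) ≤ n := hn
          push_cast [Nat.cast_sub this]
          ring
  have hsum1 : ∑ j ∈ Sᶜ \ {i}, y j ≤ ((Sᶜ \ {i}).card : ℝ) * m := by
    calc ∑ j ∈ Sᶜ \ {i}, y j ≤ ∑ _j ∈ Sᶜ \ {i}, m :=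
          Finset.sum_le_sum (fun j _ => hym j)
      _ = ((Sᶜ \ {i}).card : ℝ) * m := by rw [Finset.sum_const]; push_cast; ring
  have hsplit : ∑ j ∈ Sᶜ, y j = y i + ∑ j ∈ Sᶜ \ {i}, y j := by
    rw [← Finset.sum_sdiff hsub1, Finset.sum_singleton, add_comm]
  have hneg : ∑ j ∈ Sᶜ, y j < 0 := by
    rw [hsplit]
    have h4 : ((Sᶜ \ {i}).card : ℝ) * m ≤ ((n : ℝ) - 1) * m :=
      mul_le_mul_of_nonneg_right hcard hm0
    nlinarith
  have htot : f Finset.univ = ∑ j ∈ S, y j + ∑ j ∈ Sᶜ, y j := by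
    rw [← hyV, Finset.sum_add_sum_compl]
  have := hyle S
  linarith
end

section
/- Let h, h' ∈ ℝ^n and L, U : {1,…,n} → ℝ satisfy L_j ≤ h_j ≤ U_j and L_j ≤ h'_j ≤ U_j for all j (as holds for points of the base polyhedron consistent with the arcs, with L = lower and U = upper). Let λ ∈ [0,1], h'' := λh + (1−λ)h', and suppose ‖h''‖₂ ≤ α·min{λ‖h‖₂, (1−λ)‖h'‖₂} for some 0 < α ≤ 1/(2√n). Then any index p maximizing j ↦ max{λ|h_j|, (1−λ)|h'_j|} satisfies L_p ≤ −(1/(2α√n))·‖h''‖_∞ and U_p ≥ (1/(2α√n))·‖h''‖_∞. -/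
private lemma aux1 (t x v : ℝ) (ht0 : 0 ≤ t) (ht1 : t ≤ 1) (hv : 0 < v)
    (hx : v ≤ t * x) : v ≤ x := by
  have hx0 : 0 < x := by
    by_contra hc
    push_neg at hc
    have : t * x ≤ 0 := mul_nonpos_of_nonneg_of_nonpos ht0 hc
    linarith
  have : t * x ≤ x := mul_le_of_le_one_left hx0.le ht1
  linarith

private lemma aux2 (t x v : ℝ) (ht0 : 0 ≤ t) (ht1 : t ≤ 1) (hv : 0 < v)
    (hx : t * x ≤ -v) : x ≤ -v := by
  have := aux1 t (-x) v ht0 ht1 hv (by nlinarith)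
  linarith

/-- Sandwich lemma.  Suppose `L_j ≤ h_j, h'_j ≤ U_j` for all `j`, let
`h'' = λ·h + (1−λ)·h'` with `λ ∈ [0,1]`, and suppose
`‖h''‖₂ ≤ α · min(λ‖h‖₂, (1−λ)‖h'‖₂)` for some `0 < α ≤ 1/(2√n)`.  Then any index `p`
maximizing `j ↦ max(λ|h_j|, (1−λ)|h'_j|)` satisfies
`L_p ≤ −(1/(2α√n))·‖h''‖_∞` and `U_p ≥ (1/(2α√n))·‖h''‖_∞`. -/
theorem stmt7 (n : ℕ) (hn : 1 ≤ n) (h h' L U : Fin n → ℝ)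
    (hL : ∀ j, L j ≤ h j) (hU : ∀ j, h j ≤ U j)
    (hL' : ∀ j, L j ≤ h' j) (hU' : ∀ j, h' j ≤ U j)
    (l : ℝ) (hl0 : 0 ≤ l) (hl1 : l ≤ 1)
    (α : ℝ) (hα0 : 0 < α) (hα : α ≤ 1 / (2 * Real.sqrt n))
    (hnorm : Real.sqrt (∑ j, (l * h j + (1 - l) * h' j) ^ 2) ≤
      α * min (l * Real.sqrt (∑ j, h j ^ 2)) ((1 - l) * Real.sqrt (∑ j, h' j ^ 2)))
    (p : Fin n)
    (hp : ∀ j, max (l * |h j|) ((1 - l) * |h' j|) ≤ max (l * |h p|) ((1 - l) * |h' p|)) :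
    L p ≤ -(1 / (2 * α * Real.sqrt n)) * (⨆ j, |l * h j + (1 - l) * h' j|) ∧
      (1 / (2 * α * Real.sqrt n)) * (⨆ j, |l * h j + (1 - l) * h' j|) ≤ U p := by
  have hn0 : (0:ℝ) < n := by exact_mod_cast hn
  have hs : 0 < Real.sqrt n := Real.sqrt_pos.mpr hn0
  haveI : Nonempty (Fin n) := ⟨⟨0, hn⟩⟩
  set M := ⨆ j, |l * h j + (1 - l) * h' j| with hMdef
  have hbdd : BddAbove (Set.range fun j => |l * h j + (1 - l) * h' j|) :=
    Set.Finite.bddAbove (Set.finite_range _)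
  have hMle : ∀ j, |l * h j + (1 - l) * h' j| ≤ M := fun j => le_ciSup hbdd j
  have hM0 : 0 ≤ M := le_trans (abs_nonneg _) (hMle ⟨0, hn⟩)
  set maxp := max (l * |h p|) ((1 - l) * |h' p|) with hmaxp
  have hmp0 : 0 ≤ maxp := le_trans (mul_nonneg hl0 (abs_nonneg _)) (le_max_left _ _)
  -- step 1 : M ≤ ℓ2 norm of h''
  have h1 : M ≤ Real.sqrt (∑ j, (l * h j + (1 - l) * h' j) ^ 2) := by
    apply ciSup_le
    intro j
    rw [← Real.sqrt_sq_eq_abs]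
    exact Real.sqrt_le_sqrt
      (Finset.single_le_sum (f := fun i => (l * h i + (1 - l) * h' i) ^ 2)
        (fun i _ => sq_nonneg _) (Finset.mem_univ j))
  -- step 2 : l * ‖h‖₂ ≤ √n * maxp
  have h2 : l * Real.sqrt (∑ j, h j ^ 2) ≤ Real.sqrt n * maxp := by
    have e1 : l * Real.sqrt (∑ j, h j ^ 2) = Real.sqrt (∑ j, (l * h j) ^ 2) := by
      have : ∑ j, (l * h j) ^ 2 = l ^ 2 * ∑ j, h j ^ 2 := by
        rw [Finset.mul_sum]; congr 1; ext j; ring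
      rw [this, Real.sqrt_mul (sq_nonneg l), Real.sqrt_sq hl0]
    have e2 : Real.sqrt (∑ j : Fin n, (l * h j) ^ 2) ≤
        Real.sqrt (∑ _j : Fin n, maxp ^ 2) := by
      apply Real.sqrt_le_sqrt
      apply Finset.sum_le_sum
      intro j _
      have hj : l * |h j| ≤ maxp := le_trans (le_max_left _ _) (hp j)
      have habs : |l * h j| = l * |h j| := by
        rw [abs_mul, abs_of_nonneg hl0]
      calc (l * h j) ^ 2 = |l * h j| ^ 2 := (sq_abs _).symm
        _ ≤ maxp ^ 2 := by
            rw [habs]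
            exact pow_le_pow_left₀ (mul_nonneg hl0 (abs_nonneg _)) hj 2
    have e3 : (∑ _j : Fin n, maxp ^ 2) = (n : ℝ) * maxp ^ 2 := by
      rw [Finset.sum_const, Finset.card_univ, Fintype.card_fin, nsmul_eq_mul]
    rw [e1]
    calc Real.sqrt (∑ j : Fin n, (l * h j) ^ 2)
        ≤ Real.sqrt ((n : ℝ) * maxp ^ 2) := by rw [← e3]; exact e2
      _ = Real.sqrt n * maxp := by
          rw [Real.sqrt_mul hn0.le, Real.sqrt_sq hmp0]
  have key : M ≤ α * (Real.sqrt n * maxp) :=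
    h1.trans (hnorm.trans (mul_le_mul_of_nonneg_left
      ((min_le_left _ _).trans h2) hα0.le))
  set v := 1 / (2 * α * Real.sqrt n) * M with hvdef
  have hαs : 2 * α * Real.sqrt n ≤ 1 := by
    rw [le_div_iff₀ (by positivity)] at hα
    nlinarith
  have hαspos : 0 < 2 * α * Real.sqrt n := by positivity
  rcases eq_or_lt_of_le hM0 with hM | hM
  · -- M = 0 case
    have hHp : l * h p + (1 - l) * h' p = 0 :=
      abs_eq_zero.mp (le_antisymm ((hMle p).trans hM.ge) (abs_nonneg _))
    constructor
    · have hz : -(1 / (2 * α * Real.sqrt n)) * M = 0 := by rw [← hM]; ring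
      rw [hz]
      rcases le_or_gt (h p) 0 with h0 | h0
      · linarith [hL p]
      rcases le_or_gt (h' p) 0 with h0' | h0'
      · linarith [hL' p]
      · exfalso
        rcases lt_or_ge l 1 with hll | hll
        · nlinarith [mul_nonneg hl0 h0.le, mul_pos (by linarith : (0:ℝ) < 1 - l) h0']
        · have : l = 1 := le_antisymm hl1 hll
          rw [this] at hHp; linarith
    · have hz : v = 0 := by rw [hvdef, ← hM]; ring
      rw [hz]
      rcases le_or_gt 0 (h p) with h0 | h0
      · linarith [hU p]
      rcases le_or_gt 0 (h' p) with h0' | h0'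
      · linarith [hU' p]
      · exfalso
        rcases lt_or_ge l 1 with hll | hll
        · nlinarith [mul_nonpos_of_nonneg_of_nonpos hl0 h0.le,
            mul_neg_of_pos_of_neg (by linarith : (0:ℝ) < 1 - l) h0']
        · have : l = 1 := le_antisymm hl1 hll
          rw [this] at hHp; linarith
  · -- M > 0 case
    have hv : 0 < v := by positivity
    have hveq : v * (2 * α * Real.sqrt n) = M := by
      rw [hvdef]; field_simp
    have hMv : M ≤ v := by
      nlinarith [mul_le_mul_of_nonneg_left hαs hv.le]
    have h2v : 2 * v ≤ maxp := by
      have : 2 * v = M / (α * Real.sqrt n) := by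
        rw [hvdef]; field_simp
      rw [this, div_le_iff₀ (by positivity)]
      nlinarith
    have hHple := abs_le.mp (hMle p)
    have hl1' : 1 - l ≤ 1 := by linarith
    have hl0' : 0 ≤ 1 - l := by linarith
    rcases le_total ((1 - l) * |h' p|) (l * |h p|) with hc | hc
    · -- maxp = l * |h p|
      have hA : 2 * v ≤ l * |h p| := by
        rw [hmaxp, max_eq_left hc] at h2v; exact h2v
      rcases le_or_gt 0 (h p) with hs0 | hs0
      · rw [abs_of_nonneg hs0] at hA
        have hUp : v ≤ h p := aux1 l (h p) v hl0 hl1 hv (by linarith)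
        have hB : (1 - l) * h' p ≤ -v := by linarith [hHple.2]
        have hLp : h' p ≤ -v := aux2 (1 - l) (h' p) v hl0' hl1' hv hB
        refine ⟨?_, ?_⟩
        · have hconv : -(1 / (2 * α * Real.sqrt n)) * M = -v := by rw [hvdef]; ring
          rw [hconv]; exact le_trans (hL' p) hLp
        · exact hUp.trans (hU p)
      · rw [abs_of_neg hs0] at hA
        have hring : l * -h p = -(l * h p) := by ring
        have hA' : l * h p ≤ -v := by linarith
        have hLp : h p ≤ -v := aux2 l (h p) v hl0 hl1 hv hA'
        have hB : v ≤ (1 - l) * h' p := by linarith [hHple.1]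
        have hUp : v ≤ h' p := aux1 (1 - l) (h' p) v hl0' hl1' hv hB
        refine ⟨?_, ?_⟩
        · have hconv : -(1 / (2 * α * Real.sqrt n)) * M = -v := by rw [hvdef]; ring
          rw [hconv]; exact le_trans (hL p) hLp
        · exact hUp.trans (hU' p)
    · -- maxp = (1-l) * |h' p|
      have hA : 2 * v ≤ (1 - l) * |h' p| := by
        rw [hmaxp, max_eq_right hc] at h2v; exact h2v
      rcases le_or_gt 0 (h' p) with hs0 | hs0
      · rw [abs_of_nonneg hs0] at hA
        have hUp : v ≤ h' p := aux1 (1 - l) (h' p) v hl0' hl1' hv (by linarith)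
        have hB : l * h p ≤ -v := by linarith [hHple.2]
        have hLp : h p ≤ -v := aux2 l (h p) v hl0 hl1 hv hB
        refine ⟨?_, ?_⟩
        · have hconv : -(1 / (2 * α * Real.sqrt n)) * M = -v := by rw [hvdef]; ring
          rw [hconv]; exact le_trans (hL p) hLp
        · exact hUp.trans (hU' p)
      · rw [abs_of_neg hs0] at hA
        have hring : (1 - l) * -h' p = -((1 - l) * h' p) := by ring
        have hA' : (1 - l) * h' p ≤ -v := by linarith
        have hLp : h' p ≤ -v := aux2 (1 - l) (h' p) v hl0' hl1' hv hA'
        have hB : v ≤ l * h p := by linarith [hHple.1]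
        have hUp : v ≤ h p := aux1 l (h p) v hl0 hl1 hv hB
        refine ⟨?_, ?_⟩
        · have hconv : -(1 / (2 * α * Real.sqrt n)) * M = -v := by rw [hvdef]; ring
          rw [hconv]; exact le_trans (hL' p) hLp
        · exact hUp.trans (hU p)
end

section
/- Let W ⊆ ℤ^n be a finite set of integer points with ‖w‖_∞ ≤ M for all w ∈ W, let P = conv(W) be their convex hull, and let z ∈ ℤ^n be an integer cost vector such that x* ∈ W is the unique minimizer of w ↦ ⟨z, w⟩ over W. Then for every δ > 0 and every y ∈ P with ⟨z, y⟩ < ⟨z, x*⟩ + δ, one has ‖y − x*‖_∞ ≤ 2nMδ. -/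
lemma stmt8_int_sum {n : ℕ} (z : Fin n → ℤ) (w : Fin n → ℝ)
    (h : ∀ i, ∃ m : ℤ, w i = (m : ℝ)) :
    ∃ k : ℤ, ∑ i, (z i : ℝ) * w i = (k : ℝ) := by
  choose m hm using h
  refine ⟨∑ i, z i * m i, ?_⟩
  push_cast
  exact Finset.sum_congr rfl fun i _ => by rw [hm i]

/-- Deterministic part of the isolation lemma.  Let `W` be a finite set of integer points
with `‖w‖_∞ ≤ M`, `P = conv(W)`, and let `z` be an integer cost vector for which
`x* ∈ W` is the unique minimizer of `w ↦ ⟨z, w⟩` over `W`.  Then for every `δ > 0` and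
every `y ∈ P` with `⟨z, y⟩ < ⟨z, x*⟩ + δ`, we have `‖y − x*‖_∞ ≤ 2nMδ`. -/
theorem stmt8 (n : ℕ) (hn : 1 ≤ n) (M : ℝ) (hM : 0 ≤ M)
    (W : Finset (Fin n → ℝ))
    (hWint : ∀ w ∈ W, ∀ i, ∃ m : ℤ, w i = (m : ℝ))
    (hWbd : ∀ w ∈ W, ∀ i, |w i| ≤ M)
    (z : Fin n → ℤ) (xstar : Fin n → ℝ) (hx : xstar ∈ W)
    (hmin : ∀ w ∈ W, w ≠ xstar →
      ∑ i, (z i : ℝ) * xstar i < ∑ i, (z i : ℝ) * w i) :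
    ∀ δ : ℝ, 0 < δ → ∀ y ∈ convexHull ℝ (W : Set (Fin n → ℝ)),
      ∑ i, (z i : ℝ) * y i < ∑ i, (z i : ℝ) * xstar i + δ →
      ∀ i, |y i - xstar i| ≤ 2 * n * M * δ := by
  intro δ hδ y hy hylt i
  -- gap lemma
  have hgap : ∀ w ∈ W, w ≠ xstar →
      ∑ i, (z i : ℝ) * xstar i + 1 ≤ ∑ i, (z i : ℝ) * w i := by
    intro w hw hne
    obtain ⟨k, hk⟩ := stmt8_int_sum z w (hWint w hw)
    obtain ⟨l, hl⟩ := stmt8_int_sum z xstar (hWint xstar hx)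
    have h := hmin w hw hne
    rw [hk, hl] at *
    have : l < k := by exact_mod_cast h
    have : l + 1 ≤ k := this
    rw [hk, hl]
    exact_mod_cast this
  -- convex combination
  rw [Finset.convexHull_eq] at hy
  obtain ⟨c, hc0, hc1, hcy⟩ := hy
  rw [Finset.centerMass_eq_of_sum_1 _ _ hc1] at hcy
  have hy_eq : ∀ j, y j = ∑ w ∈ W, c w * w j := by
    intro j
    rw [← hcy]
    simp [Finset.sum_apply]
  have hzy : ∑ j, (z j : ℝ) * y j = ∑ w ∈ W, c w * ∑ j, (z j : ℝ) * w j := by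
    simp_rw [hy_eq, Finset.mul_sum]
    rw [Finset.sum_comm]
    refine Finset.sum_congr rfl fun w _ => ?_
    exact Finset.sum_congr rfl fun j _ => by ring
  set s : ℝ := ∑ w ∈ W.erase xstar, c w with hs
  have hsplit : ∀ f : (Fin n → ℝ) → ℝ,
      ∑ w ∈ W, f w = f xstar + ∑ w ∈ W.erase xstar, f w := by
    intro f
    rw [Finset.add_sum_erase _ _ hx]
  have hs0 : 0 ≤ s := Finset.sum_nonneg fun w hw => hc0 w (Finset.mem_of_mem_erase hw)
  have hslt : s < δ := by
    have hb : ∑ w ∈ W, c w * ∑ j, (z j : ℝ) * w j ≥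
        (∑ j, (z j : ℝ) * xstar j) + s := by
      rw [hsplit (fun w => c w * ∑ j, (z j : ℝ) * w j)]
      have h1 : ∀ w ∈ W.erase xstar,
          c w * ((∑ j, (z j : ℝ) * xstar j) + 1) ≤ c w * ∑ j, (z j : ℝ) * w j := by
        intro w hw
        exact mul_le_mul_of_nonneg_left
          (hgap w (Finset.mem_of_mem_erase hw) (Finset.ne_of_mem_erase hw))
          (hc0 w (Finset.mem_of_mem_erase hw))
      have h2 : ∑ w ∈ W.erase xstar, c w * ((∑ j, (z j : ℝ) * xstar j) + 1) ≤
          ∑ w ∈ W.erase xstar, c w * ∑ j, (z j : ℝ) * w j :=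
        Finset.sum_le_sum h1
      have h3 : ∑ w ∈ W.erase xstar, c w * ((∑ j, (z j : ℝ) * xstar j) + 1)
          = s * (∑ j, (z j : ℝ) * xstar j) + s := by
        rw [hs, ← Finset.sum_mul]; ring
      have hcx : c xstar = 1 - s := by
        have := hsplit c
        rw [hc1] at this
        linarith
      have h4 : c xstar * (∑ j, (z j : ℝ) * xstar j)
          = (∑ j, (z j : ℝ) * xstar j) - s * (∑ j, (z j : ℝ) * xstar j) := by
        rw [hcx]; ring
      linarith [h2, h3, h4]
    rw [hzy] at hylt
    linarith
  -- bound coordinates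
  have hyi : y i - xstar i = ∑ w ∈ W.erase xstar, c w * (w i - xstar i) := by
    have hsum : ∑ w ∈ W, c w * (w i - xstar i)
        = c xstar * (xstar i - xstar i) + ∑ w ∈ W.erase xstar, c w * (w i - xstar i) :=
      hsplit (fun w => c w * (w i - xstar i))
    have : y i - xstar i = ∑ w ∈ W, c w * (w i - xstar i) := by
      simp_rw [hy_eq, mul_sub, Finset.sum_sub_distrib, ← Finset.sum_mul, hc1, one_mul]
    rw [this, hsum]; ring
  have habs : |y i - xstar i| ≤ s * (2 * M) := by
    rw [hyi]
    calc |∑ w ∈ W.erase xstar, c w * (w i - xstar i)|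
        ≤ ∑ w ∈ W.erase xstar, |c w * (w i - xstar i)| := Finset.abs_sum_le_sum_abs _ _
      _ ≤ ∑ w ∈ W.erase xstar, c w * (2 * M) := by
          refine Finset.sum_le_sum fun w hw => ?_
          have hcw := hc0 w (Finset.mem_of_mem_erase hw)
          rw [abs_mul, abs_of_nonneg hcw]
          refine mul_le_mul_of_nonneg_left ?_ hcw
          have h1 := hWbd w (Finset.mem_of_mem_erase hw) i
          have h2 := hWbd xstar hx i
          calc |w i - xstar i| ≤ |w i| + |xstar i| := abs_sub _ _
            _ ≤ 2 * M := by linarith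
      _ = s * (2 * M) := by rw [hs, ← Finset.sum_mul]
  have hn' : (1 : ℝ) ≤ n := by exact_mod_cast hn
  have h5 : s * (2 * M) ≤ δ * (2 * M) :=
    mul_le_mul_of_nonneg_right (le_of_lt hslt) (by linarith)
  have h6 : 0 ≤ ((n : ℝ) - 1) * (M * δ) :=
    mul_nonneg (by linarith) (mul_nonneg hM hδ.le)
  linarith [habs, h5, h6]
end

section
/- Let K₁, K₂ ⊆ ℝ^n be nonempty compact convex sets with K₁ ∩ K₂ ≠ ∅, let M ≥ 1 satisfy ‖x‖₂ ≤ M for all x ∈ K₁ ∪ K₂ and ‖c‖₂ ≤ M, and let λ ≥ 1. Define f_λ(x,y) := ½⟨c,x⟩ + ½⟨c,y⟩ − (λ/2)‖x−y‖₂² − (1/(2λ))‖x‖₂² − (1/(2λ))‖y‖₂². Then f_λ has a unique maximizer (x_λ, y_λ) over K₁ × K₂, and this maximizer satisfies ‖x_λ − y_λ‖₂² ≤ 6M²/λ and max_{x ∈ K₁∩K₂} ⟨c,x⟩ ≤ f_λ(x_λ, y_λ) + M²/λ. -/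
open scoped RealInnerProductSpace

/-- The regularized objective
`f_λ(x,y) = ½⟨c,x⟩ + ½⟨c,y⟩ − (λ/2)‖x−y‖² − (1/(2λ))‖x‖² − (1/(2λ))‖y‖²`. -/
noncomputable def regObj {n : ℕ} (c : EuclideanSpace ℝ (Fin n)) (lam : ℝ)
    (x y : EuclideanSpace ℝ (Fin n)) : ℝ :=
  (1 / 2) * ⟪c, x⟫ + (1 / 2) * ⟪c, y⟫ - (lam / 2) * ‖x - y‖ ^ 2
    - (1 / (2 * lam)) * ‖x‖ ^ 2 - (1 / (2 * lam)) * ‖y‖ ^ 2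

lemma regObj_mid {n : ℕ} (c : EuclideanSpace ℝ (Fin n)) (lam : ℝ) (hlam : lam ≠ 0)
    (x y x' y' : EuclideanSpace ℝ (Fin n)) :
    regObj c lam ((1/2:ℝ) • (x + x')) ((1/2:ℝ) • (y + y'))
      = (regObj c lam x y + regObj c lam x' y') / 2
        + (lam / 8) * ‖(x - x') - (y - y')‖ ^ 2
        + (1 / (8 * lam)) * ‖x - x'‖ ^ 2 + (1 / (8 * lam)) * ‖y - y'‖ ^ 2 := by
  simp only [regObj, ← real_inner_self_eq_norm_sq, inner_add_left, inner_add_right,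
    inner_sub_left, inner_sub_right, real_inner_smul_left, real_inner_smul_right,
    smul_add, smul_sub]
  rw [real_inner_comm x' x, real_inner_comm y' y, real_inner_comm y x,
    real_inner_comm y' x, real_inner_comm y x', real_inner_comm y' x']
  field_simp
  ring

lemma regObj_cont {n : ℕ} (c : EuclideanSpace ℝ (Fin n)) (lam : ℝ) :
    Continuous (fun q : EuclideanSpace ℝ (Fin n) × EuclideanSpace ℝ (Fin n) =>
      regObj c lam q.1 q.2) := by
  have h1 : Continuous fun q : EuclideanSpace ℝ (Fin n) × EuclideanSpace ℝ (Fin n) =>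
      (⟪c, q.1⟫ : ℝ) := continuous_const.inner continuous_fst
  have h2 : Continuous fun q : EuclideanSpace ℝ (Fin n) × EuclideanSpace ℝ (Fin n) =>
      (⟪c, q.2⟫ : ℝ) := continuous_const.inner continuous_snd
  unfold regObj
  exact (((((continuous_const.mul h1).add (continuous_const.mul h2)).sub
    (continuous_const.mul (((continuous_fst.sub continuous_snd).norm).pow 2))).sub
    (continuous_const.mul ((continuous_fst.norm).pow 2))).sub
    (continuous_const.mul ((continuous_snd.norm).pow 2)))

/-- The regularized relaxation of optimizing `⟨c,·⟩` over `K₁ ∩ K₂`:  `f_λ` has a unique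
maximizer `(x_λ, y_λ)` over `K₁ × K₂`, which satisfies `‖x_λ − y_λ‖² ≤ 6M²/λ` and
`max_{x ∈ K₁∩K₂} ⟨c,x⟩ ≤ f_λ(x_λ, y_λ) + M²/λ`. -/
theorem stmt9 (n : ℕ) (K₁ K₂ : Set (EuclideanSpace ℝ (Fin n)))
    (hK₁c : IsCompact K₁) (hK₁v : Convex ℝ K₁) (hK₁ne : K₁.Nonempty)
    (hK₂c : IsCompact K₂) (hK₂v : Convex ℝ K₂) (hK₂ne : K₂.Nonempty)
    (hne : (K₁ ∩ K₂).Nonempty)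
    (c : EuclideanSpace ℝ (Fin n)) (M : ℝ) (hM : 1 ≤ M)
    (hb₁ : ∀ x ∈ K₁, ‖x‖ ≤ M) (hb₂ : ∀ x ∈ K₂, ‖x‖ ≤ M) (hc : ‖c‖ ≤ M)
    (lam : ℝ) (hlam : 1 ≤ lam) :
    ∃ p : EuclideanSpace ℝ (Fin n) × EuclideanSpace ℝ (Fin n),
      p.1 ∈ K₁ ∧ p.2 ∈ K₂ ∧
      (∀ q : EuclideanSpace ℝ (Fin n) × EuclideanSpace ℝ (Fin n),
        q.1 ∈ K₁ → q.2 ∈ K₂ → regObj c lam q.1 q.2 ≤ regObj c lam p.1 p.2) ∧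
      (∀ q : EuclideanSpace ℝ (Fin n) × EuclideanSpace ℝ (Fin n),
        q.1 ∈ K₁ → q.2 ∈ K₂ →
        (∀ r : EuclideanSpace ℝ (Fin n) × EuclideanSpace ℝ (Fin n),
          r.1 ∈ K₁ → r.2 ∈ K₂ → regObj c lam r.1 r.2 ≤ regObj c lam q.1 q.2) →
        q = p) ∧
      ‖p.1 - p.2‖ ^ 2 ≤ 6 * M ^ 2 / lam ∧
      ∀ x ∈ K₁ ∩ K₂, ⟪c, x⟫ ≤ regObj c lam p.1 p.2 + M ^ 2 / lam := by
  have hlam0 : (0:ℝ) < lam := lt_of_lt_of_le one_pos hlam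
  -- existence
  obtain ⟨p, hpmem, hmax⟩ := (hK₁c.prod hK₂c).exists_isMaxOn (hK₁ne.prod hK₂ne)
    (regObj_cont c lam).continuousOn
  obtain ⟨hp1, hp2⟩ := hpmem
  have hmax' : ∀ q : EuclideanSpace ℝ (Fin n) × EuclideanSpace ℝ (Fin n),
      q.1 ∈ K₁ → q.2 ∈ K₂ → regObj c lam q.1 q.2 ≤ regObj c lam p.1 p.2 := by
    intro q hq1 hq2
    exact hmax (Set.mem_prod.2 ⟨hq1, hq2⟩)
  refine ⟨p, hp1, hp2, hmax', ?_, ?_, ?_⟩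
  · -- uniqueness
    intro q hq1 hq2 hqmax
    by_contra hne'
    have heq : regObj c lam q.1 q.2 = regObj c lam p.1 p.2 :=
      le_antisymm (hmax' q hq1 hq2) (hqmax p hp1 hp2)
    -- midpoint
    have hm1 : (1/2:ℝ) • (q.1 + p.1) ∈ K₁ := by
      have := hK₁v hq1 hp1 (by norm_num : (0:ℝ) ≤ 1/2) (by norm_num : (0:ℝ) ≤ 1/2)
        (by norm_num)
      simpa [smul_add] using this
    have hm2 : (1/2:ℝ) • (q.2 + p.2) ∈ K₂ := by
      have := hK₂v hq2 hp2 (by norm_num : (0:ℝ) ≤ 1/2) (by norm_num : (0:ℝ) ≤ 1/2)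
        (by norm_num)
      simpa [smul_add] using this
    have hmle := hmax' ((1/2:ℝ) • (q.1 + p.1), (1/2:ℝ) • (q.2 + p.2)) hm1 hm2
    rw [regObj_mid c lam (ne_of_gt hlam0)] at hmle
    have hpos : 0 < (1 / (8 * lam)) * ‖q.1 - p.1‖ ^ 2 + (1 / (8 * lam)) * ‖q.2 - p.2‖ ^ 2 := by
      have h8 : 0 < 1 / (8 * lam) := by positivity
      have : q.1 ≠ p.1 ∨ q.2 ≠ p.2 := by
        by_contra h
        push_neg at h
        exact hne' (Prod.ext h.1 h.2)
      rcases this with h | h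
      · have h1 : 0 < ‖q.1 - p.1‖ ^ 2 := pow_pos (norm_sub_pos_iff.mpr h) 2
        nlinarith [sq_nonneg ‖q.2 - p.2‖, mul_pos h8 h1]
      · have h1 : 0 < ‖q.2 - p.2‖ ^ 2 := pow_pos (norm_sub_pos_iff.mpr h) 2
        nlinarith [sq_nonneg ‖q.1 - p.1‖, mul_pos h8 h1]
    have hquad : 0 ≤ (lam / 8) * ‖(q.1 - p.1) - (q.2 - p.2)‖ ^ 2 := by positivity
    linarith [hmle, heq]
  · -- gap bound
    obtain ⟨z, hz1, hz2⟩ := hne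
    have hfz := hmax' (z, z) hz1 hz2
    have hzz : regObj c lam z z = ⟪c, z⟫ - (1 / lam) * ‖z‖ ^ 2 := by
      simp only [regObj, sub_self, norm_zero]
      field_simp
      ring
    rw [hzz] at hfz
    have hcz : |⟪c, z⟫| ≤ M ^ 2 := by
      calc |⟪c, z⟫| ≤ ‖c‖ * ‖z‖ := abs_real_inner_le_norm c z
        _ ≤ M * M := mul_le_mul hc (hb₁ z hz1) (norm_nonneg z) (by linarith : (0:ℝ) ≤ M)
        _ = M ^ 2 := (sq M).symm
    have hcp1 : ⟪c, p.1⟫ ≤ M ^ 2 := by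
      calc ⟪c, p.1⟫ ≤ ‖c‖ * ‖p.1‖ := real_inner_le_norm c p.1
        _ ≤ M * M := mul_le_mul hc (hb₁ _ hp1) (norm_nonneg _) (by linarith : (0:ℝ) ≤ M)
        _ = M ^ 2 := (sq M).symm
    have hcp2 : ⟪c, p.2⟫ ≤ M ^ 2 := by
      calc ⟪c, p.2⟫ ≤ ‖c‖ * ‖p.2‖ := real_inner_le_norm c p.2
        _ ≤ M * M := mul_le_mul hc (hb₂ _ hp2) (norm_nonneg _) (by linarith : (0:ℝ) ≤ M)
        _ = M ^ 2 := (sq M).symm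
    have hz2' : ‖z‖ ^ 2 ≤ M ^ 2 := by
      have := hb₁ z hz1
      nlinarith [norm_nonneg z]
    rw [le_div_iff₀ hlam0]
    have h1 : (0:ℝ) ≤ (1 / (2 * lam)) * ‖p.1‖ ^ 2 := by positivity
    have h2 : (0:ℝ) ≤ (1 / (2 * lam)) * ‖p.2‖ ^ 2 := by positivity
    have habs := abs_le.1 hcz
    unfold regObj at hfz
    have hinv : (1 / lam) * ‖z‖ ^ 2 ≤ M ^ 2 := by
      rw [one_div, inv_mul_le_iff₀ hlam0]
      nlinarith
    nlinarith [hfz]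
  · -- approximation bound
    intro x hx
    obtain ⟨hx1, hx2⟩ := hx
    have hfx := hmax' (x, x) hx1 hx2
    have hxx : regObj c lam x x = ⟪c, x⟫ - (1 / lam) * ‖x‖ ^ 2 := by
      simp only [regObj, sub_self, norm_zero]
      field_simp
      ring
    rw [hxx] at hfx
    have hxM : ‖x‖ ^ 2 ≤ M ^ 2 := by
      have := hb₁ x hx1
      nlinarith [norm_nonneg x]
    have : (1 / lam) * ‖x‖ ^ 2 ≤ M ^ 2 / lam := by
      rw [one_div_mul_eq_div, div_le_div_iff₀ hlam0 hlam0]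
      nlinarith
    linarith
end

section
/- Let D ≥ 1 and let f : ℝ^n → ℝ be convex on the ball B_D = {y : ‖y‖₂ ≤ D}. Let x ∈ ℝ^n with ‖x‖₂ ≤ 1, let 0 ≤ δ ≤ 1, and let g be a δ-subgradient of f at x on B_D, i.e. f(y) + δ ≥ f(x) + ⟨g, y − x⟩ for all y ∈ B_D. Then: (1) if ‖g‖₂ ≤ ½√(δ/D), then f(x) ≤ min_{‖y‖₂ ≤ D} f(y) + 2√(δD); (2) if ‖g‖₂ > ½√(δ/D), then every y with ‖y‖₂ ≤ D and f(y) ≤ f(x) satisfies ⟨g/‖g‖₂, y⟩ ≤ ⟨g/‖g‖₂, x⟩ + 2√(δD). -/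
/-!
Everything is read off the `δ`-subgradient inequality at a point `y` of the ball.  If `g` is
small, Cauchy–Schwarz and `‖y - x‖ ≤ D + 1 ≤ 2D` bound `-⟪g, y - x⟫` by `√(δD)`, and `δ ≤ √(δD)`.
If `g` is large and `f y ≤ f x`, then `⟪g, y - x⟫ ≤ δ`, and dividing by
`‖g‖ > ½√(δ/D)` turns `δ` into at most `2√(δD)`.
-/

open scoped RealInnerProductSpace

open Metric

/-- The `δ`-subdifferential `∂_δ f(x)` of `f` at `x`, relative to the set `s`. -/
def approxSubdifferential {E : Type*} [SeminormedAddCommGroup E] [InnerProductSpace ℝ E]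
    (s : Set E) (f : E → ℝ) (δ : ℝ) (x : E) : Set E :=
  {g | ∀ y ∈ s, f x + ⟪g, y - x⟫ ≤ f y + δ}

namespace approxSubdifferential

variable {E : Type*} [SeminormedAddCommGroup E] [InnerProductSpace ℝ E]
  {s : Set E} {f : E → ℝ} {δ : ℝ} {x y g : E}

theorem le_add_norm_mul (hg : g ∈ approxSubdifferential s f δ x) (hy : y ∈ s) :
    f x ≤ f y + δ + ‖g‖ * ‖y - x‖ := by
  have hneg : -⟪g, y - x⟫ ≤ ‖g‖ * ‖y - x‖ := by
    simpa [inner_neg_left] using real_inner_le_norm (-g) (y - x)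
  linarith [hg y hy]

theorem inner_sub_le (hg : g ∈ approxSubdifferential s f δ x) (hy : y ∈ s) (hfy : f y ≤ f x) :
    ⟪g, y - x⟫ ≤ δ := by
  linarith [hg y hy]

end approxSubdifferential

theorem inner_normalize_le_of_inner_sub_le {E : Type*} [SeminormedAddCommGroup E]
    [InnerProductSpace ℝ E] {x y g : E} {c : ℝ} (hg : 0 < ‖g‖) (h : ⟪g, y - x⟫ ≤ c) :
    ⟪(1 / ‖g‖) • g, y⟫ ≤ ⟪(1 / ‖g‖) • g, x⟫ + c / ‖g‖ := by
  rw [inner_sub_right] at h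
  rw [real_inner_smul_left, real_inner_smul_left, one_div_mul_eq_div, one_div_mul_eq_div,
    ← add_div]
  exact div_le_div_of_nonneg_right (by linarith) hg.le

theorem Real.sqrt_div_mul_self_eq_sqrt_mul (δ : ℝ) {D : ℝ} (hD : 0 ≤ D) :
    √(δ / D) * D = √(δ * D) := by
  rw [Real.sqrt_div' δ hD, Real.sqrt_mul' δ hD, div_mul_eq_mul_div, mul_div_assoc,
    Real.div_sqrt]

theorem Real.sqrt_mul_mul_sqrt_div {δ D : ℝ} (hδ : 0 ≤ δ) (hD : 0 < D) :
    √(δ * D) * √(δ / D) = δ := by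
  rw [← Real.sqrt_div_mul_self_eq_sqrt_mul δ hD.le, mul_right_comm,
    Real.mul_self_sqrt (div_nonneg hδ hD.le), div_mul_cancel₀ δ hD.ne']

section Ball

variable {E : Type*} [SeminormedAddCommGroup E] [InnerProductSpace ℝ E]
  {f : E → ℝ} {D δ : ℝ} {x y g : E}

theorem le_add_of_mem_approxSubdifferential_of_norm_le (hD : 1 ≤ D) (hx : ‖x‖ ≤ 1)
    (hδ0 : 0 ≤ δ) (hδ1 : δ ≤ 1) (hg : g ∈ approxSubdifferential (closedBall 0 D) f δ x)
    (hg_small : ‖g‖ ≤ 1 / 2 * √(δ / D)) (hy : ‖y‖ ≤ D) :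
    f x ≤ f y + 2 * √(δ * D) := by
  have hdist : ‖y - x‖ ≤ 2 * D := by linarith [norm_sub_le y x]
  have hinner : ‖g‖ * ‖y - x‖ ≤ √(δ * D) :=
    calc ‖g‖ * ‖y - x‖ ≤ 1 / 2 * √(δ / D) * (2 * D) :=
          mul_le_mul hg_small hdist (norm_nonneg _) (by positivity)
      _ = √(δ * D) := by
          rw [← Real.sqrt_div_mul_self_eq_sqrt_mul δ (by linarith)]; ring
  have hδ : δ ≤ √(δ * D) :=
    (Real.le_sqrt hδ0 (by positivity)).2 (by nlinarith)
  linarith [approxSubdifferential.le_add_norm_mul hg (mem_closedBall_zero_iff.2 hy)]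

theorem inner_normalize_le_of_mem_approxSubdifferential (hD : 0 < D) (hδ0 : 0 ≤ δ)
    (hg : g ∈ approxSubdifferential (closedBall 0 D) f δ x)
    (hg_large : 1 / 2 * √(δ / D) < ‖g‖) (hy : ‖y‖ ≤ D) (hfy : f y ≤ f x) :
    ⟪(1 / ‖g‖) • g, y⟫ ≤ ⟪(1 / ‖g‖) • g, x⟫ + 2 * √(δ * D) := by
  have hg_pos : 0 < ‖g‖ := lt_of_le_of_lt (by positivity) hg_large
  have hδ : δ / ‖g‖ ≤ 2 * √(δ * D) := by
    rw [div_le_iff₀ hg_pos]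
    calc δ = √(δ * D) * √(δ / D) := (Real.sqrt_mul_mul_sqrt_div hδ0 hD).symm
      _ ≤ 2 * √(δ * D) * ‖g‖ := by nlinarith [Real.sqrt_nonneg (δ * D)]
  linarith [inner_normalize_le_of_inner_sub_le hg_pos
    (approxSubdifferential.inner_sub_le hg (mem_closedBall_zero_iff.2 hy) hfy)]

end Ball

theorem stmt11_general (n : ℕ) (D : ℝ) (hD : 1 ≤ D)
    (f : EuclideanSpace ℝ (Fin n) → ℝ)
    (x : EuclideanSpace ℝ (Fin n)) (hx : ‖x‖ ≤ 1)
    (δ : ℝ) (hδ0 : 0 ≤ δ) (hδ1 : δ ≤ 1)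
    (g : EuclideanSpace ℝ (Fin n))
    (hg : ∀ y : EuclideanSpace ℝ (Fin n), ‖y‖ ≤ D → f x + ⟪g, y - x⟫ ≤ f y + δ) :
    (‖g‖ ≤ (1 / 2) * Real.sqrt (δ / D) →
      ∀ y : EuclideanSpace ℝ (Fin n), ‖y‖ ≤ D → f x ≤ f y + 2 * Real.sqrt (δ * D)) ∧
    ((1 / 2) * Real.sqrt (δ / D) < ‖g‖ →
      ∀ y : EuclideanSpace ℝ (Fin n), ‖y‖ ≤ D → f y ≤ f x →
        ⟪(1 / ‖g‖) • g, y⟫ ≤ ⟪(1 / ‖g‖) • g, x⟫ + 2 * Real.sqrt (δ * D)) := by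
  have hg' : g ∈ approxSubdifferential (closedBall 0 D) f δ x :=
    fun y hy => hg y (mem_closedBall_zero_iff.1 hy)
  exact ⟨fun hg_small _ hy =>
      le_add_of_mem_approxSubdifferential_of_norm_le hD hx hδ0 hδ1 hg' hg_small hy,
    fun hg_large _ hy hfy =>
      inner_normalize_le_of_mem_approxSubdifferential (by linarith) hδ0 hg' hg_large hy hfy⟩

/-- From approximate subgradients to separation.  Let `f` be convex on the ball of radius
`D ≥ 1`, `‖x‖ ≤ 1`, `0 ≤ δ ≤ 1`, and let `g` be a `δ`-subgradient of `f` at `x` on the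
ball.  Then: (1) if `‖g‖ ≤ ½√(δ/D)`, `x` is a `2√(δD)`-approximate minimizer of `f` over
the ball; (2) otherwise the normalized halfspace
`⟨g/‖g‖, y⟩ ≤ ⟨g/‖g‖, x⟩ + 2√(δD)` contains every `y` in the ball with `f(y) ≤ f(x)`. -/
theorem stmt11 (n : ℕ) (D : ℝ) (hD : 1 ≤ D)
    (f : EuclideanSpace ℝ (Fin n) → ℝ)
    (hf : ConvexOn ℝ (Metric.closedBall (0 : EuclideanSpace ℝ (Fin n)) D) f)
    (x : EuclideanSpace ℝ (Fin n)) (hx : ‖x‖ ≤ 1)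
    (δ : ℝ) (hδ0 : 0 ≤ δ) (hδ1 : δ ≤ 1)
    (g : EuclideanSpace ℝ (Fin n))
    (hg : ∀ y : EuclideanSpace ℝ (Fin n), ‖y‖ ≤ D → f x + ⟪g, y - x⟫ ≤ f y + δ) :
    (‖g‖ ≤ (1 / 2) * Real.sqrt (δ / D) →
      ∀ y : EuclideanSpace ℝ (Fin n), ‖y‖ ≤ D → f x ≤ f y + 2 * Real.sqrt (δ * D)) ∧
    ((1 / 2) * Real.sqrt (δ / D) < ‖g‖ →
      ∀ y : EuclideanSpace ℝ (Fin n), ‖y‖ ≤ D → f y ≤ f x →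
        ⟪(1 / ‖g‖) • g, y⟫ ≤ ⟪(1 / ‖g‖) • g, x⟫ + 2 * Real.sqrt (δ * D)) :=
  stmt11_general n D hD f x hx δ hδ0 hδ1 g hg
end

section
/- Let f : ℝ^n → ℝ be twice continuously differentiable, let Q ∈ ℝ^{n×n} be symmetric positive definite, and let 0 ≤ μ ≤ L with L > 0. Let x₀ ∈ ℝ^n, set x₁ := x₀ − (1/L)·Q^{-1}∇f(x₀), and x_α := x₀ + α(x₁ − x₀). Suppose that μ·Q ⪯ ∇²f(x_α) ⪯ L·Q in the Loewner order for every α ∈ [0,1]. Then: (1) ‖∇f(x₁)‖_{Q^{-1}} ≤ (1 − μ/L)·‖∇f(x₀)‖_{Q^{-1}}, and (2) f(x₁) ≥ f(x₀) − (1/L)·‖∇f(x₀)‖²_{Q^{-1}}. -/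
/-!
Along the segment `x_t = x₀ + t (x₁ - x₀)` the gradient changes by the integrated Hessian,
`∇f(x₁) - ∇f(x₀) = ∫₀¹ ∇²f(x_t) (x₁ - x₀) dt`, and `x₁ - x₀ = -Q⁻¹∇f(x₀)/L`. Hence, with
`w = Q⁻¹∇f(x₀)` and `u = Q⁻¹∇f(x₁)`, `‖∇f(x₁)‖²_{Q⁻¹} = ∫₀¹ M_t(w, u) dt` for the forms
`M_t = Q - ∇²f(x_t)/L`. The sandwich `μQ ⪯ ∇²f(x_t) ⪯ LQ` gives `0 ⪯ M_t ⪯ (1 - μ/L) Q`, so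
Cauchy–Schwarz for `M_t` bounds the integrand by `(1 - μ/L) ‖∇f(x₀)‖_{Q⁻¹} ‖∇f(x₁)‖_{Q⁻¹}`;
dividing by `‖∇f(x₁)‖_{Q⁻¹}` gives (1). For (2), `μ ≥ 0` makes `f` convex along the segment, so
`f(x₁) ≥ f(x₀) + ⟨∇f(x₀), x₁ - x₀⟩ = f(x₀) - ‖∇f(x₀)‖²_{Q⁻¹}/L`.
-/

open Matrix Set

theorem Real.sqrt_le_of_le_mul_sqrt {s t : ℝ} (hs : 0 ≤ s) (ht : 0 ≤ t) (h : s ≤ t * √s) :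
    √s ≤ t := by
  rcases hs.eq_or_lt with rfl | hs
  · simpa using ht
  · refine le_of_mul_le_mul_right ?_ (Real.sqrt_pos.2 hs)
    rwa [Real.mul_self_sqrt hs.le]

section Quadratic

variable {ι : Type*} [Fintype ι] {Q : Matrix ι ι ℝ}

theorem Matrix.PosSemidef.dotProduct_mulVec_comm (hQ : Q.PosSemidef) (a b : ι → ℝ) :
    a ⬝ᵥ Q *ᵥ b = b ⬝ᵥ Q *ᵥ a := by
  rw [dotProduct_mulVec, ← mulVec_transpose, ← conjTranspose_eq_transpose_of_trivial,
    hQ.isHermitian.eq, dotProduct_comm]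

theorem Matrix.PosSemidef.dotProduct_mulVec_self_nonneg (hQ : Q.PosSemidef) (v : ι → ℝ) :
    0 ≤ v ⬝ᵥ Q *ᵥ v := by
  simpa using hQ.dotProduct_mulVec_nonneg v

theorem Matrix.PosSemidef.dotProduct_mulVec_sub_le {B : LinearMap.BilinForm ℝ (ι → ℝ)}
    (hQ : Q.PosSemidef) (hB : LinearMap.IsSymm B) {μ L : ℝ} (hL : 0 < L) (hμL : μ ≤ L)
    (hlow : ∀ v, μ * (v ⬝ᵥ Q *ᵥ v) ≤ B v v) (hup : ∀ v, B v v ≤ L * (v ⬝ᵥ Q *ᵥ v))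
    (a b : ι → ℝ) :
    a ⬝ᵥ Q *ᵥ b - L⁻¹ * B a b ≤ (1 - μ / L) * (√(a ⬝ᵥ Q *ᵥ a) * √(b ⬝ᵥ Q *ᵥ b)) := by
  classical
  set c := 1 - μ / L
  have hc : 0 ≤ c := sub_nonneg.2 ((div_le_one hL).2 hμL)
  set M := Q.toBilin' - L⁻¹ • B
  have hM (a b : ι → ℝ) : M a b = a ⬝ᵥ Q *ᵥ b - L⁻¹ * B a b := by
    simp [M, toBilin'_apply']
  have hM_nonneg (v : ι → ℝ) : 0 ≤ M v v := by
    rw [hM, sub_nonneg, inv_mul_le_iff₀ hL]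
    exact hup v
  have hM_le (v : ι → ℝ) : M v v ≤ c * (v ⬝ᵥ Q *ᵥ v) := by
    have : μ / L * (v ⬝ᵥ Q *ᵥ v) ≤ L⁻¹ * B v v := by
      rw [div_eq_inv_mul, mul_assoc]
      exact mul_le_mul_of_nonneg_left (hlow v) (inv_nonneg.2 hL.le)
    rw [hM]
    linarith
  have hM_symm : LinearMap.IsSymm M := ⟨fun a b => by
    rw [RingHom.id_apply, hM, hM, hQ.dotProduct_mulVec_comm a b, ← hB.eq a b, RingHom.id_apply]⟩
  calc a ⬝ᵥ Q *ᵥ b - L⁻¹ * B a b = M a b := (hM a b).symm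
    _ ≤ √(M a a * M b b) :=
      (Real.sq_le (mul_nonneg (hM_nonneg a) (hM_nonneg b))).1
        (M.apply_sq_le_of_symm hM_nonneg hM_symm a b) |>.2
    _ ≤ √(c * (a ⬝ᵥ Q *ᵥ a) * (c * (b ⬝ᵥ Q *ᵥ b))) :=
      Real.sqrt_le_sqrt (mul_le_mul (hM_le a) (hM_le b) (hM_nonneg b)
        (mul_nonneg hc (hQ.dotProduct_mulVec_self_nonneg a)))
    _ = c * (√(a ⬝ᵥ Q *ᵥ a) * √(b ⬝ᵥ Q *ᵥ b)) := by
      rw [mul_mul_mul_comm, ← sq, Real.sqrt_mul (sq_nonneg c), Real.sqrt_sq hc,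
        Real.sqrt_mul (hQ.dotProduct_mulVec_self_nonneg a)]

variable [DecidableEq ι]

theorem Matrix.PosDef.dotProduct_eq_inv_mulVec_dotProduct (hQ : Q.PosDef) (g v : ι → ℝ) :
    g ⬝ᵥ v = Q⁻¹ *ᵥ g ⬝ᵥ Q *ᵥ v := by
  rw [hQ.posSemidef.dotProduct_mulVec_comm, mulVec_mulVec,
    mul_nonsing_inv _ hQ.det_pos.ne'.isUnit, one_mulVec, dotProduct_comm]

end Quadratic

section Segment

variable {E G : Type*} [NormedAddCommGroup E] [NormedSpace ℝ E] [NormedAddCommGroup G]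
  [NormedSpace ℝ G]

theorem hasDerivAt_add_smul (x d : E) (t : ℝ) : HasDerivAt (fun s : ℝ => x + s • d) d t := by
  simpa using ((hasDerivAt_id t).smul_const d).const_add x

theorem ContDiff.continuous_fderiv_apply_segment {F : E → G} (hF : ContDiff ℝ 1 F) (x d : E) :
    Continuous fun t : ℝ => fderiv ℝ F (x + t • d) d :=
  ((hF.continuous_fderiv one_ne_zero).comp (by fun_prop)).clm_apply continuous_const

theorem ContDiff.sub_eq_intervalIntegral_fderiv [CompleteSpace G] {F : E → G}
    (hF : ContDiff ℝ 1 F) (x d : E) :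
    F (x + d) - F x = ∫ t in (0 : ℝ)..1, fderiv ℝ F (x + t • d) d := by
  have := intervalIntegral.integral_eq_sub_of_hasDerivAt (f := fun t => F (x + t • d))
    (fun t _ => (hF.differentiable one_ne_zero _).hasFDerivAt.comp_hasDerivAt t
      (hasDerivAt_add_smul x d t))
    ((hF.continuous_fderiv_apply_segment x d).intervalIntegrable 0 1)
  simpa using this.symm

variable {f : E → ℝ}

theorem ContDiff.continuous_fderiv_fderiv_apply_segment (hf : ContDiff ℝ 2 f) (x d v : E) :
    Continuous fun t : ℝ => fderiv ℝ (fderiv ℝ f) (x + t • d) d v :=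
  ((hf.fderiv_right (m := 1) le_rfl).continuous_fderiv_apply_segment x d).clm_apply
    continuous_const

theorem ContDiff.fderiv_add_apply_le (hf : ContDiff ℝ 2 f) {x d v : E} {K : ℝ}
    (h : ∀ t ∈ Icc (0 : ℝ) 1, fderiv ℝ (fderiv ℝ f) (x + t • d) d v ≤ K) :
    fderiv ℝ f (x + d) v ≤ fderiv ℝ f x v + K := by
  have hf' := hf.fderiv_right (m := 1) le_rfl
  have hFTC := congrArg (· v) (hf'.sub_eq_intervalIntegral_fderiv x d)
  simp only [_root_.sub_apply, ContinuousLinearMap.intervalIntegral_apply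
    ((hf'.continuous_fderiv_apply_segment x d).intervalIntegrable 0 1)] at hFTC
  have := intervalIntegral.integral_mono_on (μ := MeasureTheory.volume) zero_le_one
    ((hf.continuous_fderiv_fderiv_apply_segment x d v).intervalIntegrable 0 1)
    intervalIntegrable_const h
  simp only [intervalIntegral.integral_const, sub_zero, one_smul] at this
  linarith

theorem ContDiff.monotoneOn_fderiv_apply_segment (hf : ContDiff ℝ 2 f) {x d : E}
    (h : ∀ t ∈ Icc (0 : ℝ) 1, 0 ≤ fderiv ℝ (fderiv ℝ f) (x + t • d) d d) :
    MonotoneOn (fun t : ℝ => fderiv ℝ f (x + t • d) d) (Icc 0 1) := by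
  have hderiv (t : ℝ) : HasDerivAt (fun t : ℝ => fderiv ℝ f (x + t • d) d)
      (fderiv ℝ (fderiv ℝ f) (x + t • d) d d) t := by
    simpa using (((hf.fderiv_right (m := 1) le_rfl).differentiable one_ne_zero _).hasFDerivAt
      |>.comp_hasDerivAt t (hasDerivAt_add_smul x d t)).clm_apply (hasDerivAt_const t d)
  refine monotoneOn_of_hasDerivWithinAt_nonneg (convex_Icc 0 1)
    (HasDerivAt.continuousOn fun t _ => hderiv t) (fun t _ => (hderiv t).hasDerivWithinAt) ?_
  rw [interior_Icc]
  exact fun t ht => h t (Ioo_subset_Icc_self ht)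

theorem ContDiff.add_fderiv_le_of_fderiv_fderiv_nonneg (hf : ContDiff ℝ 2 f) {x d : E}
    (h : ∀ t ∈ Icc (0 : ℝ) 1, 0 ≤ fderiv ℝ (fderiv ℝ f) (x + t • d) d d) :
    f x + fderiv ℝ f x d ≤ f (x + d) := by
  have hf1 : ContDiff ℝ 1 f := hf.of_le one_le_two
  have hmono := hf.monotoneOn_fderiv_apply_segment h
  have := intervalIntegral.integral_mono_on (μ := MeasureTheory.volume) zero_le_one
    intervalIntegrable_const ((hf1.continuous_fderiv_apply_segment x d).intervalIntegrable 0 1)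
    (fun t ht => by simpa using hmono (left_mem_Icc.2 zero_le_one) ht ht.1)
  simp only [intervalIntegral.integral_const, sub_zero, one_smul] at this
  linarith [hf1.sub_eq_intervalIntegral_fderiv x d]

end Segment

section GradientStep

variable {ι : Type*} [Fintype ι] [DecidableEq ι] {Q : Matrix ι ι ℝ} {f : (ι → ℝ) → ℝ}
  {g : (ι → ℝ) → ι → ℝ} {μ L : ℝ} {x₀ x₁ : ι → ℝ}

theorem sqrt_dotProduct_inv_mulVec_gradient_step_le (hf : ContDiff ℝ 2 f)
    (hg : ∀ z v, fderiv ℝ f z v = g z ⬝ᵥ v) (hQ : Q.PosDef) (hL : 0 < L) (hμL : μ ≤ L)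
    (hx₁ : x₁ = x₀ - L⁻¹ • Q⁻¹ *ᵥ g x₀)
    (hH : ∀ t ∈ Icc (0 : ℝ) 1, ∀ v,
      μ * (v ⬝ᵥ Q *ᵥ v) ≤ fderiv ℝ (fderiv ℝ f) (x₀ + t • (x₁ - x₀)) v v ∧
      fderiv ℝ (fderiv ℝ f) (x₀ + t • (x₁ - x₀)) v v ≤ L * (v ⬝ᵥ Q *ᵥ v)) :
    √(g x₁ ⬝ᵥ Q⁻¹ *ᵥ g x₁) ≤ (1 - μ / L) * √(g x₀ ⬝ᵥ Q⁻¹ *ᵥ g x₀) := by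
  set w := Q⁻¹ *ᵥ g x₀
  set u := Q⁻¹ *ᵥ g x₁
  set c := 1 - μ / L
  have hd : x₁ - x₀ = -L⁻¹ • w := by rw [hx₁, sub_sub_cancel_left, neg_smul]
  have hwu : w ⬝ᵥ Q *ᵥ u = g x₀ ⬝ᵥ u := (hQ.dotProduct_eq_inv_mulVec_dotProduct _ _).symm
  have hww : w ⬝ᵥ Q *ᵥ w = g x₀ ⬝ᵥ w := (hQ.dotProduct_eq_inv_mulVec_dotProduct _ _).symm
  have huu : u ⬝ᵥ Q *ᵥ u = g x₁ ⬝ᵥ u := (hQ.dotProduct_eq_inv_mulVec_dotProduct _ _).symm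
  have hstep := hf.fderiv_add_apply_le (x := x₀) (d := x₁ - x₀) (v := u)
    (K := c * (√(w ⬝ᵥ Q *ᵥ w) * √(u ⬝ᵥ Q *ᵥ u)) - w ⬝ᵥ Q *ᵥ u) fun t ht => by
      set H := fderiv ℝ (fderiv ℝ f) (x₀ + t • (x₁ - x₀))
      have hsymm : LinearMap.IsSymm H.toLinearMap₁₂ :=
        ⟨fun a b => by
          simpa using (hf.contDiffAt (x := x₀ + t • (x₁ - x₀))).isSymmSndFDerivAt (by simp) a b⟩
      have := hQ.posSemidef.dotProduct_mulVec_sub_le hsymm hL hμL (fun v => (hH t ht v).1)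
        (fun v => (hH t ht v).2) w u
      have hHd : H (x₁ - x₀) u = -L⁻¹ * H w u := by simp [hd]
      simp only [ContinuousLinearMap.toLinearMap₁₂_apply_apply_apply] at this
      linarith
  rw [add_sub_cancel, hg, hg, hwu, hww, huu, add_sub_cancel] at hstep
  exact Real.sqrt_le_of_le_mul_sqrt (hQ.inv.posSemidef.dotProduct_mulVec_self_nonneg _)
    (mul_nonneg (sub_nonneg.2 ((div_le_one hL).2 hμL)) (Real.sqrt_nonneg _))
    (by linarith)

end GradientStep

/-- Gradient descent lemma.  Let `f` be twice continuously differentiable with gradient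
`g`, let `Q` be symmetric positive definite, `0 ≤ μ ≤ L`, `L > 0`,
`x₁ = x₀ − (1/L)·Q⁻¹∇f(x₀)`, and suppose `μQ ⪯ ∇²f(x_α) ⪯ LQ` along the segment
`x_α = x₀ + α(x₁ − x₀)`, `α ∈ [0,1]`.  Then
`‖∇f(x₁)‖_{Q⁻¹} ≤ (1 − μ/L)‖∇f(x₀)‖_{Q⁻¹}` and
`f(x₁) ≥ f(x₀) − (1/L)‖∇f(x₀)‖²_{Q⁻¹}`. -/
theorem stmt13 (n : ℕ) (f : (Fin n → ℝ) → ℝ) (hf : ContDiff ℝ 2 f)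
    (g : (Fin n → ℝ) → (Fin n → ℝ))
    (hg : ∀ z : Fin n → ℝ,
      HasFDerivAt f
        (∑ i : Fin n, g z i • (ContinuousLinearMap.proj i : (Fin n → ℝ) →L[ℝ] ℝ)) z)
    (Q : Matrix (Fin n) (Fin n) ℝ) (hQ : Q.PosDef)
    (μ L : ℝ) (hμ0 : 0 ≤ μ) (hμL : μ ≤ L) (hL : 0 < L)
    (x₀ x₁ : Fin n → ℝ) (hx₁ : x₁ = x₀ - (1 / L) • Q⁻¹.mulVec (g x₀))
    (hHess : ∀ α ∈ Set.Icc (0 : ℝ) 1, ∀ v : Fin n → ℝ,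
      μ * (v ⬝ᵥ Q.mulVec v) ≤ iteratedFDeriv ℝ 2 f (x₀ + α • (x₁ - x₀)) ![v, v] ∧
      iteratedFDeriv ℝ 2 f (x₀ + α • (x₁ - x₀)) ![v, v] ≤ L * (v ⬝ᵥ Q.mulVec v)) :
    Real.sqrt (g x₁ ⬝ᵥ Q⁻¹.mulVec (g x₁)) ≤
        (1 - μ / L) * Real.sqrt (g x₀ ⬝ᵥ Q⁻¹.mulVec (g x₀)) ∧
      f x₀ - (1 / L) * (g x₀ ⬝ᵥ Q⁻¹.mulVec (g x₀)) ≤ f x₁ := by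
  have hgrad (z v : Fin n → ℝ) : fderiv ℝ f z v = g z ⬝ᵥ v := by
    simp [(hg z).fderiv, dotProduct]
  simp only [iteratedFDeriv_two_apply, Matrix.cons_val_zero, Matrix.cons_val_one] at hHess
  rw [one_div] at hx₁ ⊢
  refine ⟨sqrt_dotProduct_inv_mulVec_gradient_step_le hf hgrad hQ hL hμL hx₁ hHess, ?_⟩
  have hdescent := hf.add_fderiv_le_of_fderiv_fderiv_nonneg (x := x₀) (d := x₁ - x₀) fun t ht =>
    (mul_nonneg hμ0 (hQ.posSemidef.dotProduct_mulVec_self_nonneg _)).trans (hHess t ht _).1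
  have hd : g x₀ ⬝ᵥ (x₁ - x₀) = -L⁻¹ * (g x₀ ⬝ᵥ Q⁻¹ *ᵥ g x₀) := by
    simp [hx₁, dotProduct_smul]
  rw [add_sub_cancel, hgrad, hd] at hdescent
  linarith
end

section
/- Let A ∈ ℝ^{m×n} be a matrix with no zero rows, let λ > 0, and define the (regularized) leverage scores ψ_i := [A(AᵀA + λI)⁻¹Aᵀ]_{ii} for i = 1,…,m (each ψ_i > 0). Then for every a ∈ ℝ^n: Σ_{i=1}^m (1/ψ_i)·(A(AᵀA + λI)⁻¹ a)_i⁴ ≤ (aᵀ(AᵀA + λI)⁻¹ a)². -/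
/-!
With `M = AᵀA + λI`, `v = M⁻¹a` and `s = aᵀM⁻¹a`, the coordinates of `Av` are
`(Av)ᵢ = Aᵢ·M⁻¹a`, so Cauchy–Schwarz for the inner product `M⁻¹` gives `(Av)ᵢ² ≤ ψᵢ s`.
Moreover `‖Av‖² = vᵀAᵀAv ≤ vᵀMv = s`. Hence
`Σ ψᵢ⁻¹ (Av)ᵢ⁴ ≤ Σ s (Av)ᵢ² ≤ s²`.
-/

open Matrix

theorem Matrix.PosSemidef.dotProduct_mulVec_sq_le {ι : Type*} [Fintype ι] {B : Matrix ι ι ℝ}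
    (hB : B.PosSemidef) (x y : ι → ℝ) :
    (x ⬝ᵥ B *ᵥ y) ^ 2 ≤ (x ⬝ᵥ B *ᵥ x) * (y ⬝ᵥ B *ᵥ y) := by
  let := B.toSeminormedAddCommGroup hB
  let := B.toInnerProductSpace hB
  have inner_eq : ∀ u w : ι → ℝ, inner ℝ u w = u ⬝ᵥ B *ᵥ w := fun u w => by
    change (B *ᵥ w) ⬝ᵥ star u = _
    rw [star_trivial, dotProduct_comm]
  simpa only [inner_eq, sq] using real_inner_mul_inner_self_le x y

theorem Matrix.mul_mul_transpose_apply_self {ι κ R : Type*} [Fintype ι] [CommSemiring R]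
    (A : Matrix κ ι R) (B : Matrix ι ι R) (i : κ) :
    (A * B * Aᵀ) i i = A i ⬝ᵥ B *ᵥ A i := by
  rw [Matrix.mul_assoc]
  simp [mul_apply, dotProduct, mulVec, Finset.mul_sum]

theorem Matrix.posDef_transpose_mul_self_add_smul_one {ι κ : Type*} [Fintype ι] [Fintype κ]
    [DecidableEq ι] (A : Matrix κ ι ℝ) {lam : ℝ} (hlam : 0 < lam) :
    (Aᵀ * A + lam • (1 : Matrix ι ι ℝ)).PosDef := by
  rw [← conjTranspose_eq_transpose_of_trivial]
  exact PosDef.posSemidef_add (posSemidef_conjTranspose_mul_self A) (PosDef.one.smul hlam)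

theorem Matrix.sum_mulVec_sq_le_dotProduct_mulVec {ι κ : Type*} [Fintype ι] [Fintype κ]
    [DecidableEq ι] (A : Matrix κ ι ℝ) {lam : ℝ} (hlam : 0 ≤ lam) (v : ι → ℝ) :
    ∑ i, (A *ᵥ v) i ^ 2 ≤ v ⬝ᵥ (Aᵀ * A + lam • 1) *ᵥ v := by
  have hAA : v ⬝ᵥ (Aᵀ * A) *ᵥ v = ∑ i, (A *ᵥ v) i ^ 2 := by
    rw [← mulVec_mulVec, dotProduct_mulVec, ← mulVec_transpose, transpose_transpose]
    simp only [dotProduct, sq]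
  have hvv : 0 ≤ v ⬝ᵥ v := Finset.sum_nonneg fun i _ => mul_self_nonneg (v i)
  rw [add_mulVec, dotProduct_add, hAA, smul_mulVec, one_mulVec, dotProduct_smul, smul_eq_mul]
  exact le_add_of_nonneg_right (mul_nonneg hlam hvv)

theorem one_div_mul_pow_four_le {ψ x s : ℝ} (hs : 0 ≤ s) (hx : x ^ 2 ≤ ψ * s) :
    1 / ψ * x ^ 4 ≤ s * x ^ 2 := by
  rcases le_or_gt ψ 0 with hψ | hψ
  · have hx0 : x = 0 := pow_eq_zero_iff two_ne_zero |>.mp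
      (le_antisymm (hx.trans (mul_nonpos_of_nonpos_of_nonneg hψ hs)) (sq_nonneg x))
    simp [hx0]
  · rw [one_div, inv_mul_le_iff₀ hψ]
    nlinarith [sq_nonneg x]

theorem sum_one_div_mul_pow_four_le {ι : Type*} [Fintype ι] {ψ x : ι → ℝ} {s : ℝ}
    (hx : ∀ i, x i ^ 2 ≤ ψ i * s) (hsum : ∑ i, x i ^ 2 ≤ s) :
    ∑ i, 1 / ψ i * x i ^ 4 ≤ s ^ 2 := by
  have hs : 0 ≤ s := (Finset.sum_nonneg fun i _ => sq_nonneg (x i)).trans hsum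
  calc ∑ i, 1 / ψ i * x i ^ 4
      ≤ ∑ i, s * x i ^ 2 := Finset.sum_le_sum fun i _ => one_div_mul_pow_four_le hs (hx i)
    _ = s * ∑ i, x i ^ 2 := (Finset.mul_sum _ _ _).symm
    _ ≤ s ^ 2 := by rw [sq]; exact mul_le_mul_of_nonneg_left hsum hs

theorem stmt15_general (m n : ℕ) (A : Matrix (Fin m) (Fin n) ℝ)
    (lam : ℝ) (hlam : 0 < lam) (a : Fin n → ℝ) :
    ∑ i : Fin m,
        (1 / ((A * (Aᵀ * A + lam • (1 : Matrix (Fin n) (Fin n) ℝ))⁻¹ * Aᵀ) i i)) *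
          (A.mulVec ((Aᵀ * A + lam • (1 : Matrix (Fin n) (Fin n) ℝ))⁻¹.mulVec a) i) ^ 4
      ≤ (a ⬝ᵥ (Aᵀ * A + lam • (1 : Matrix (Fin n) (Fin n) ℝ))⁻¹.mulVec a) ^ 2 := by
  set M := Aᵀ * A + lam • (1 : Matrix (Fin n) (Fin n) ℝ)
  have hM : M.PosDef := posDef_transpose_mul_self_add_smul_one A hlam
  have hMv : M *ᵥ M⁻¹ *ᵥ a = a := by
    rw [mulVec_mulVec, mul_nonsing_inv _ hM.det_pos.ne'.isUnit, one_mulVec]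
  refine sum_one_div_mul_pow_four_le (fun i => ?_) ?_
  · rw [mul_mul_transpose_apply_self]
    exact hM.inv.posSemidef.dotProduct_mulVec_sq_le (A i) a
  · calc _ ≤ M⁻¹ *ᵥ a ⬝ᵥ M *ᵥ M⁻¹ *ᵥ a := sum_mulVec_sq_le_dotProduct_mulVec A hlam.le _
      _ = a ⬝ᵥ M⁻¹ *ᵥ a := by rw [hMv, dotProduct_comm]

/-- Technical leverage-score inequality.  Let `A` have no zero rows, `λ > 0`, and let
`ψ_i = [A(AᵀA + λI)⁻¹Aᵀ]_{ii}` be the regularized leverage scores.  Then for all `a`,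
`Σᵢ (1/ψᵢ)·(A(AᵀA + λI)⁻¹a)ᵢ⁴ ≤ (aᵀ(AᵀA + λI)⁻¹a)²`. -/
theorem stmt15 (m n : ℕ) (A : Matrix (Fin m) (Fin n) ℝ) (hA : ∀ i, A i ≠ 0)
    (lam : ℝ) (hlam : 0 < lam) (a : Fin n → ℝ) :
    ∑ i : Fin m,
        (1 / ((A * (Aᵀ * A + lam • (1 : Matrix (Fin n) (Fin n) ℝ))⁻¹ * Aᵀ) i i)) *
          (A.mulVec ((Aᵀ * A + lam • (1 : Matrix (Fin n) (Fin n) ℝ))⁻¹.mulVec a) i) ^ 4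
      ≤ (a ⬝ᵥ (Aᵀ * A + lam • (1 : Matrix (Fin n) (Fin n) ℝ))⁻¹.mulVec a) ^ 2 :=
  stmt15_general m n A lam hlam a
end

section
/- Let A ∈ ℝ^{m×n}, b ∈ ℝ^m, c_e ≥ 0, λ > 0, and let x be a point with slack s(x) := Ax − b entrywise strictly positive. Write S_x := diag(s(x)), A_x := S_x⁻¹A, ψ_i(x) := [A_x(A_xᵀA_x + λI)⁻¹A_xᵀ]_{ii}, μ(x) := min_i ψ_i(x), Ψ(x) := diag(ψ(x)), and H(x) := A_xᵀ(c_e·I + Ψ(x))A_x + λI; assume c_e + μ(x) > 0. If y ∈ ℝ^n satisfies ‖x − y‖_{H(x)} ≤ ε·√(c_e + μ(x)) for some 0 ≤ ε < 1, then Ay ≥ b (so y lies in the polytope P = {z : Az ≥ b}) and (1−ε)·s_i(x) ≤ s_i(y) ≤ (1+ε)·s_i(x) for every row i, where s(y) := Ay − b. -/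
open Matrix

/-- The slack-rescaled constraint matrix `A_x = S_x⁻¹ A` where `S_x = diag(Ax − b)`. -/
noncomputable def Amat {m n : ℕ} (A : Matrix (Fin m) (Fin n) ℝ) (b : Fin m → ℝ)
    (y : Fin n → ℝ) : Matrix (Fin m) (Fin n) ℝ :=
  (Matrix.diagonal (A.mulVec y - b))⁻¹ * A

/-- The regularized leverage scores `ψᵢ(x) = [A_x(A_xᵀA_x + λI)⁻¹A_xᵀ]_{ii}`. -/
noncomputable def psiReg {m n : ℕ} (A : Matrix (Fin m) (Fin n) ℝ) (b : Fin m → ℝ)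
    (lam : ℝ) (y : Fin n → ℝ) : Fin m → ℝ :=
  fun i =>
    (Amat A b y *
      ((Amat A b y)ᵀ * Amat A b y + lam • (1 : Matrix (Fin n) (Fin n) ℝ))⁻¹ *
      (Amat A b y)ᵀ) i i

/-- The approximate Hessian `H(x) = A_xᵀ(c_e I + Ψ(x))A_x + λI`. -/
noncomputable def Hmat {m n : ℕ} (A : Matrix (Fin m) (Fin n) ℝ) (b : Fin m → ℝ)
    (ce lam : ℝ) (x : Fin n → ℝ) : Matrix (Fin n) (Fin n) ℝ :=
  (Amat A b x)ᵀ *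
      (ce • (1 : Matrix (Fin m) (Fin m) ℝ) + Matrix.diagonal (psiReg A b lam x)) *
      Amat A b x +
    lam • (1 : Matrix (Fin n) (Fin n) ℝ)

/-- Multiplicative stability of the slacks: if
`‖x − y‖_{H(x)} ≤ ε·√(c_e + μ(x))` with `0 ≤ ε < 1`, where `μ(x) = minᵢ ψᵢ(x)`, then `y`
lies in the polytope `{z : Az ≥ b}` and `(1−ε)·sᵢ(x) ≤ sᵢ(y) ≤ (1+ε)·sᵢ(x)` for all `i`. -/
theorem stmt18 (m n : ℕ) (A : Matrix (Fin m) (Fin n) ℝ) (b : Fin m → ℝ)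
    (ce lam : ℝ) (hce : 0 ≤ ce) (hlam : 0 < lam)
    (x : Fin n → ℝ) (hx : ∀ i, 0 < (A.mulVec x - b) i)
    (μ : ℝ) (hμ : IsLeast (Set.range (psiReg A b lam x)) μ) (hpos : 0 < ce + μ)
    (y : Fin n → ℝ) (ε : ℝ) (hε0 : 0 ≤ ε) (hε1 : ε < 1)
    (hdist : Real.sqrt ((x - y) ⬝ᵥ (Hmat A b ce lam x).mulVec (x - y)) ≤
      ε * Real.sqrt (ce + μ)) :
    (∀ i, b i ≤ A.mulVec y i) ∧
      ∀ i, (1 - ε) * (A.mulVec x - b) i ≤ (A.mulVec y - b) i ∧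
        (A.mulVec y - b) i ≤ (1 + ε) * (A.mulVec x - b) i := by
  set s : Fin m → ℝ := A.mulVec x - b with hs
  set v : Fin n → ℝ := x - y with hv
  set ψ : Fin m → ℝ := psiReg A b lam x with hψ
  set B : Matrix (Fin m) (Fin n) ℝ := Amat A b x with hB
  set w : Fin m → ℝ := B.mulVec v with hw
  have hψμ : ∀ j, μ ≤ ψ j := fun j => hμ.2 ⟨j, rfl⟩
  -- the middle matrix is a diagonal
  have hM : ce • (1 : Matrix (Fin m) (Fin m) ℝ) + Matrix.diagonal ψ
      = Matrix.diagonal (fun j => ce + ψ j) := by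
    ext i j
    rcases eq_or_ne i j with h | h <;>
      simp [Matrix.diagonal_apply, Matrix.one_apply, h]
  -- quadratic form identity
  have hQ : v ⬝ᵥ (Hmat A b ce lam x).mulVec v
      = (∑ j, (ce + ψ j) * (w j)^2) + lam * ∑ i, (v i)^2 := by
    rw [Hmat, hM, Matrix.add_mulVec, dotProduct_add, Matrix.smul_mulVec,
      Matrix.one_mulVec, dotProduct_smul]
    congr 1
    · rw [← Matrix.mulVec_mulVec, ← Matrix.mulVec_mulVec, Matrix.dotProduct_mulVec,
        Matrix.vecMul_transpose, ← hB, ← hw]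
      simp only [dotProduct, Matrix.mulVec_diagonal]
      exact Finset.sum_congr rfl fun j _ => by ring
    · simp only [dotProduct, smul_eq_mul, Finset.mul_sum, Pi.smul_apply]
      exact Finset.sum_congr rfl fun j _ => by ring
  have hDinv : (Matrix.diagonal s)⁻¹ = Matrix.diagonal (fun i => (s i)⁻¹) := by
    refine Matrix.inv_eq_right_inv ?_
    rw [Matrix.diagonal_mul_diagonal]
    have h : (fun i => s i * (s i)⁻¹) = fun _ => (1:ℝ) :=
      funext fun i => mul_inv_cancel₀ (hx i).ne'
    rw [h, Matrix.diagonal_one]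
  have hwi : ∀ i, w i = (s i)⁻¹ * (A.mulVec v) i := by
    intro i
    rw [hw, hB, Amat, ← hs, hDinv, ← Matrix.mulVec_mulVec]
    simp [Matrix.mulVec_diagonal]
  have hAv : ∀ i, (A.mulVec v) i = s i - (A.mulVec y - b) i := by
    intro i
    rw [hv, Matrix.mulVec_sub, hs]
    simp
  set Q : ℝ := v ⬝ᵥ (Hmat A b ce lam x).mulVec v with hQdef
  clear_value Q
  clear hQdef
  clear_value w
  clear hw hB
  clear_value ψ
  clear hψ
  clear_value v
  clear hv
  clear_value s
  clear hs
  have hQnn : 0 ≤ Q := by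
    rw [hQ]
    have h1 : 0 ≤ ∑ j, (ce + ψ j) * (w j)^2 :=
      Finset.sum_nonneg fun j _ => mul_nonneg (by nlinarith [hψμ j]) (sq_nonneg _)
    have h2 : 0 ≤ ∑ i, (v i)^2 := Finset.sum_nonneg fun i _ => sq_nonneg _
    nlinarith
  have hQle : Q ≤ ε^2 * (ce + μ) := by
    have h1 := mul_self_le_mul_self (Real.sqrt_nonneg _) hdist
    rw [Real.mul_self_sqrt hQnn] at h1
    have h2 : Real.sqrt (ce+μ) * Real.sqrt (ce+μ) = ce + μ := Real.mul_self_sqrt hpos.le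
    nlinarith
  have hwbound : ∀ i, |w i| ≤ ε := by
    intro i
    have h1 : (ce + μ) * (w i)^2 ≤ ∑ j, (ce + ψ j) * (w j)^2 := by
      calc (ce + μ) * (w i)^2 ≤ (ce + ψ i) * (w i)^2 := by
            nlinarith [hψμ i, sq_nonneg (w i)]
        _ ≤ ∑ j, (ce + ψ j) * (w j)^2 :=
            Finset.single_le_sum (f := fun j => (ce + ψ j) * (w j)^2)
              (fun j _ => mul_nonneg (by nlinarith [hψμ j]) (sq_nonneg _))
              (Finset.mem_univ i)
    have h2 : 0 ≤ ∑ i, (v i)^2 := Finset.sum_nonneg fun i _ => sq_nonneg _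
    have h3 := hQle
    rw [hQ] at h3
    have h4 : (w i)^2 ≤ ε^2 := by nlinarith
    rw [← Real.sqrt_sq_eq_abs, ← Real.sqrt_sq hε0]
    exact Real.sqrt_le_sqrt h4
  have key : ∀ i, (1-ε) * s i ≤ (A.mulVec y - b) i ∧
      (A.mulVec y - b) i ≤ (1+ε) * s i := by
    intro i
    obtain ⟨hwl, hwu⟩ := abs_le.mp (hwbound i)
    have h2 : s i * w i = s i - (A.mulVec y - b) i := by
      rw [hwi i, hAv i, ← mul_assoc, mul_inv_cancel₀ (hx i).ne', one_mul]
    have hsi := hx i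
    constructor
    · nlinarith
    · nlinarith
  refine ⟨fun i => ?_, key⟩
  have h := (key i).1
  have hsi := hx i
  simp only [Pi.sub_apply] at h hsi ⊢
  nlinarith
end

section
/- Let y = Σ_k λ_k h^{(k)} be a convex combination (λ_k ≥ 0, Σ_k λ_k = 1) of greedy vectors h^{(k)}, each arising from a permutation of V consistent with every arc of A, and suppose y is non-degenerate (it has both a positive and a negative entry). If an element p satisfies f(R(p)) − f(R(p)∖{p}) > n⁴·max_j y_j, then there exists q ∉ R(p) such that the arc (p,q) is valid: every minimizer S of f over the ring family F with p ∈ S also contains q. -/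
/-- A greedy vector lies in the submodular polyhedron: its sum over any set `T`
is at most `f T`. -/
lemma greedyVec_sum_le (n : ℕ) (f : Finset (Fin n) → ℝ)
    (hsub : ∀ A B : Finset (Fin n), f (A ∪ B) + f (A ∩ B) ≤ f A + f B)
    (hf0 : f ∅ = 0) (v : Equiv.Perm (Fin n)) (T : Finset (Fin n)) :
    ∑ j ∈ T, greedyVec n f v j ≤ f T := by
  classical
  suffices h : ∀ m : ℕ, ∀ T : Finset (Fin n),
      (∀ j ∈ T, ((v.symm j : Fin n) : ℕ) < m) → ∑ j ∈ T, greedyVec n f v j ≤ f T by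
    exact h n T (fun j _ => (v.symm j).isLt)
  intro m
  induction m with
  | zero =>
    intro T hT
    have hTe : T = ∅ :=
      Finset.eq_empty_of_forall_notMem (fun j hj => Nat.not_lt_zero _ (hT j hj))
    simp [hTe, hf0]
  | succ m ih =>
    intro T hT
    by_cases hm : ∃ j ∈ T, ((v.symm j : Fin n) : ℕ) = m
    · obtain ⟨j₀, hj₀T, hj₀⟩ := hm
      set i₀ := v.symm j₀ with hi₀
      set B := (Finset.Iio i₀).image v with hB
      have hj₀v : v i₀ = j₀ := v.apply_symm_apply j₀
      have hj₀B : j₀ ∉ B := by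
        intro hmem
        rw [hB, Finset.mem_image] at hmem
        obtain ⟨i, hi, hvi⟩ := hmem
        rw [Finset.mem_Iio] at hi
        have hii : i = i₀ := by
          have := congrArg v.symm hvi
          simpa [hi₀] using this
        exact absurd (hii ▸ hi) (lt_irrefl i₀)
      have hsubB : T.erase j₀ ⊆ B := by
        intro j hj
        rw [Finset.mem_erase] at hj
        rw [hB, Finset.mem_image]
        refine ⟨v.symm j, ?_, v.apply_symm_apply j⟩
        rw [Finset.mem_Iio]
        have h1 : ((v.symm j : Fin n) : ℕ) < m + 1 := hT j hj.2
        have h2 : ((v.symm j : Fin n) : ℕ) ≠ m := by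
          intro h
          apply hj.1
          have hvv : v.symm j = i₀ := Fin.ext (by rw [h, ← hj₀])
          have := congrArg v hvv
          rwa [v.apply_symm_apply, hj₀v] at this
        have : ((v.symm j : Fin n) : ℕ) < (i₀ : ℕ) := by omega
        exact this
      have hih : ∑ j ∈ T.erase j₀, greedyVec n f v j ≤ f (T.erase j₀) := by
        apply ih
        intro j hj
        rw [Finset.mem_erase] at hj
        have h1 : ((v.symm j : Fin n) : ℕ) < m + 1 := hT j hj.2
        have h2 : ((v.symm j : Fin n) : ℕ) ≠ m := by
          intro h
          apply hj.1
          have hvv : v.symm j = i₀ := Fin.ext (by rw [h, ← hj₀])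
          have := congrArg v hvv
          rwa [v.apply_symm_apply, hj₀v] at this
        omega
      have hIic : (Finset.Iic i₀).image v = insert j₀ B := by
        rw [hB, ← Finset.Iio_insert, Finset.image_insert, hj₀v]
      have hgj₀ : greedyVec n f v j₀ = f (insert j₀ B) - f B := by
        rw [greedyVec, ← hi₀, hIic, hB]
      have hTB1 : T ∪ B = insert j₀ B := by
        apply Finset.Subset.antisymm
        · intro j hj
          rcases Finset.mem_union.1 hj with hj | hj
          · by_cases hjj : j = j₀
            · exact hjj ▸ Finset.mem_insert_self _ _
            · exact Finset.mem_insert_of_mem (hsubB (Finset.mem_erase.2 ⟨hjj, hj⟩))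
          · exact Finset.mem_insert_of_mem hj
        · intro j hj
          rcases Finset.mem_insert.1 hj with hj | hj
          · exact Finset.mem_union_left _ (hj ▸ hj₀T)
          · exact Finset.mem_union_right _ hj
      have hTB2 : T ∩ B = T.erase j₀ := by
        ext j
        rw [Finset.mem_inter, Finset.mem_erase]
        constructor
        · rintro ⟨hjT, hjB⟩
          exact ⟨fun h => hj₀B (h ▸ hjB), hjT⟩
        · rintro ⟨hne, hjT⟩
          exact ⟨hjT, hsubB (Finset.mem_erase.2 ⟨hne, hjT⟩)⟩
      have hsm := hsub T B
      rw [hTB1, hTB2] at hsm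
      have hsplit : ∑ j ∈ T.erase j₀, greedyVec n f v j + greedyVec n f v j₀
          = ∑ j ∈ T, greedyVec n f v j := Finset.sum_erase_add T _ hj₀T
      rw [← hsplit, hgj₀]
      linarith
    · apply ih
      intro j hj
      have h1 := hT j hj
      have h2 : ((v.symm j : Fin n) : ℕ) ≠ m := fun h => hm ⟨j, hj, h⟩
      omega

/-- The total sum of a greedy vector equals `f(V)`. -/
lemma greedyVec_sum_univ (n : ℕ) (f : Finset (Fin n) → ℝ) (hf0 : f ∅ = 0)
    (v : Equiv.Perm (Fin n)) :
    ∑ j, greedyVec n f v j = f Finset.univ := by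
  classical
  have h1 : ∑ j, greedyVec n f v j = ∑ i, greedyVec n f v (v i) :=
    (Equiv.sum_comp v _).symm
  set D : ℕ → ℝ := fun m =>
    f ((Finset.univ.filter (fun i : Fin n => (i : ℕ) < m)).image v) with hD
  have h2 : ∀ i : Fin n, greedyVec n f v (v i) = D ((i : ℕ) + 1) - D (i : ℕ) := by
    intro i
    have e1 : Finset.Iic i = Finset.univ.filter (fun i' : Fin n => (i' : ℕ) < (i : ℕ) + 1) := by
      ext i'
      simp only [Finset.mem_Iic, Finset.mem_filter, Finset.mem_univ, true_and, Fin.le_def,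
        Nat.lt_succ_iff]
    have e2 : Finset.Iio i = Finset.univ.filter (fun i' : Fin n => (i' : ℕ) < (i : ℕ)) := by
      ext i'
      simp only [Finset.mem_Iio, Finset.mem_filter, Finset.mem_univ, true_and, Fin.lt_def]
    rw [greedyVec, v.symm_apply_apply, e1, e2]
  rw [h1]
  simp only [h2]
  rw [Fin.sum_univ_eq_sum_range (fun m => D (m + 1) - D m) n, Finset.sum_range_sub D n]
  have hD0 : D 0 = 0 := by
    have : (Finset.univ.filter (fun i : Fin n => (i : ℕ) < 0)) = ∅ := by
      ext i; simp
    rw [hD]; simp only [this, Finset.image_empty, hf0]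
  have hDn : D n = f Finset.univ := by
    have : (Finset.univ.filter (fun i : Fin n => (i : ℕ) < n)) = Finset.univ := by
      ext i; simp [i.isLt]
    rw [hD]; simp only [this, Finset.image_univ_equiv]
  rw [hD0, hDn, sub_zero]

/-- New-arc lemma.  Let `y = Σ_k λ_k h^{(k)}` be a non-degenerate convex combination of
greedy vectors `h^{(k)}`, each arising from a permutation consistent with every arc of
`Ar` (i.e. for each arc `(i,j)`, `j` precedes `i`).  Let `Rp = R(p)` be the set of
descendants of `p` in the digraph `(V, Ar)`.  If
`f(R(p)) − f(R(p)∖{p}) > n⁴·max_j y_j`, then there exists `q ∉ R(p)` such that the arc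
`(p,q)` is valid: every minimizer `S` of `f` over the ring family of `Ar` with `p ∈ S`
also contains `q`. -/
theorem stmt19 (n : ℕ) (hn : 1 ≤ n) (f : Finset (Fin n) → ℝ)
    (hsub : ∀ A B : Finset (Fin n), f (A ∪ B) + f (A ∩ B) ≤ f A + f B)
    (hf0 : f ∅ = 0)
    (Ar : Finset (Fin n × Fin n)) (p : Fin n) (Rp : Finset (Fin n))
    (hRp : ∀ q : Fin n, q ∈ Rp ↔ Relation.ReflTransGen (fun a b => (a, b) ∈ Ar) p q)
    (K : ℕ) (lam : Fin K → ℝ) (hlam0 : ∀ k, 0 ≤ lam k) (hlam1 : ∑ k, lam k = 1)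
    (v : Fin K → Equiv.Perm (Fin n))
    (hcons : ∀ k : Fin K, ∀ a ∈ Ar, ((v k).symm a.2 : Fin n) < (v k).symm a.1)
    (y : Fin n → ℝ) (hy : y = fun j => ∑ k, lam k * greedyVec n f (v k) j)
    (hposentry : ∃ j, 0 < y j) (hnegentry : ∃ j, y j < 0)
    (ymax : ℝ) (hymax : IsGreatest (Set.range y) ymax)
    (hbig : (n : ℝ) ^ 4 * ymax < f Rp - f (Rp.erase p)) :
    ∃ q : Fin n, q ∉ Rp ∧
      ∀ S : Finset (Fin n),
        (∀ a ∈ Ar, a.1 ∈ S → a.2 ∈ S) →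
        (∀ T : Finset (Fin n), (∀ a ∈ Ar, a.1 ∈ T → a.2 ∈ T) → f S ≤ f T) →
        p ∈ S → q ∈ S := by
  classical
  -- y lies in the submodular polyhedron
  have hyP : ∀ T : Finset (Fin n), ∑ j ∈ T, y j ≤ f T := by
    intro T
    have e1 : ∑ j ∈ T, y j = ∑ k, lam k * ∑ j ∈ T, greedyVec n f (v k) j := by
      simp only [hy]
      rw [Finset.sum_comm]
      exact Finset.sum_congr rfl (fun k _ => (Finset.mul_sum _ _ _).symm)
    rw [e1]
    calc ∑ k, lam k * ∑ j ∈ T, greedyVec n f (v k) j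
        ≤ ∑ k, lam k * f T :=
          Finset.sum_le_sum (fun k _ =>
            mul_le_mul_of_nonneg_left (greedyVec_sum_le n f hsub hf0 (v k) T) (hlam0 k))
      _ = f T := by rw [← Finset.sum_mul, hlam1, one_mul]
  -- the total sum of y equals f(V)
  have hyV : ∑ j, y j = f Finset.univ := by
    have e1 : ∑ j, y j = ∑ k, lam k * ∑ j, greedyVec n f (v k) j := by
      simp only [hy]
      rw [Finset.sum_comm]
      exact Finset.sum_congr rfl (fun k _ => (Finset.mul_sum _ _ _).symm)
    rw [e1]
    calc ∑ k, lam k * ∑ j, greedyVec n f (v k) j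
        = ∑ k, lam k * f Finset.univ :=
          Finset.sum_congr rfl (fun k _ => by rw [greedyVec_sum_univ n f hf0 (v k)])
      _ = f Finset.univ := by rw [← Finset.sum_mul, hlam1, one_mul]
  have hyle : ∀ j, y j ≤ ymax := fun j => hymax.2 ⟨j, rfl⟩
  have hympos : 0 < ymax := by
    obtain ⟨j, hj⟩ := hposentry
    exact lt_of_lt_of_le hj (hyle j)
  -- the key inequality : f(V) < f(Rp)
  have key : f Finset.univ < f Rp := by
    have e1 : ∑ j ∈ Rp.erase p, y j ≤ f (Rp.erase p) := hyP _
    have e2 : ∑ j ∈ Finset.univ \ Rp.erase p, y j ≤ (n : ℝ) * ymax := by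
      calc ∑ j ∈ Finset.univ \ Rp.erase p, y j
          ≤ ∑ _j ∈ Finset.univ \ Rp.erase p, ymax :=
            Finset.sum_le_sum (fun j _ => hyle j)
        _ = ((Finset.univ \ Rp.erase p).card : ℝ) * ymax := by
            rw [Finset.sum_const, nsmul_eq_mul]
        _ ≤ (n : ℝ) * ymax := by
            apply mul_le_mul_of_nonneg_right _ hympos.le
            have hc : (Finset.univ \ Rp.erase p).card ≤ n := by
              calc (Finset.univ \ Rp.erase p).card ≤ (Finset.univ : Finset (Fin n)).card :=
                    Finset.card_le_card (Finset.subset_univ _)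
                _ = n := Finset.card_univ.trans (Fintype.card_fin n)
            exact_mod_cast hc
    have e3 : ∑ j ∈ Finset.univ \ Rp.erase p, y j + ∑ j ∈ Rp.erase p, y j = ∑ j, y j :=
      Finset.sum_sdiff (Finset.subset_univ _)
    have e4 : (n : ℝ) ≤ (n : ℝ) ^ 4 := by
      have : n ≤ n ^ 4 := Nat.le_self_pow (by norm_num) n
      exact_mod_cast this
    have e5 : (n : ℝ) * ymax ≤ (n : ℝ) ^ 4 * ymax :=
      mul_le_mul_of_nonneg_right e4 hympos.le
    rw [hyV] at e3
    linarith
  -- Rp is contained in every arc-closed set containing p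
  have hRpsub : ∀ S : Finset (Fin n), (∀ a ∈ Ar, a.1 ∈ S → a.2 ∈ S) → p ∈ S → Rp ⊆ S := by
    intro S hS hpS q hq
    have hq' := (hRp q).1 hq
    clear hq
    induction hq' with
    | refl => exact hpS
    | tail _ hstep ih => exact hS _ hstep ih
  have hring_univ : ∀ a ∈ Ar, a.1 ∈ (Finset.univ : Finset (Fin n)) →
      a.2 ∈ (Finset.univ : Finset (Fin n)) := fun a _ _ => Finset.mem_univ _
  by_cases hex : ∃ S : Finset (Fin n),
      (∀ a ∈ Ar, a.1 ∈ S → a.2 ∈ S) ∧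
      (∀ T : Finset (Fin n), (∀ a ∈ Ar, a.1 ∈ T → a.2 ∈ T) → f S ≤ f T) ∧ p ∈ S
  · -- there is a minimizer containing p ; take one of smallest cardinality
    set P : Finset (Fin n) → Prop := fun S =>
      (∀ a ∈ Ar, a.1 ∈ S → a.2 ∈ S) ∧
      (∀ T : Finset (Fin n), (∀ a ∈ Ar, a.1 ∈ T → a.2 ∈ T) → f S ≤ f T) ∧ p ∈ S with hP
    obtain ⟨S₁, hS₁⟩ := hex
    have hne : (Finset.univ.filter P).Nonempty :=
      ⟨S₁, Finset.mem_filter.2 ⟨Finset.mem_univ _, hS₁⟩⟩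
    obtain ⟨S₀, hS₀mem, hS₀min⟩ := Finset.exists_min_image (Finset.univ.filter P)
      Finset.card hne
    have hS₀P : P S₀ := (Finset.mem_filter.1 hS₀mem).2
    obtain ⟨hS₀ring, hS₀opt, hpS₀⟩ := hS₀P
    have hRpS₀ : Rp ⊆ S₀ := hRpsub S₀ hS₀ring hpS₀
    have hS₀ne : S₀ ≠ Rp := by
      intro h
      have : f S₀ ≤ f Finset.univ := hS₀opt _ hring_univ
      rw [h] at this
      linarith
    have hss : Rp ⊂ S₀ := lt_of_le_of_ne hRpS₀ (Ne.symm hS₀ne)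
    obtain ⟨q, hqS₀, hqRp⟩ := Finset.exists_of_ssubset hss
    refine ⟨q, hqRp, ?_⟩
    intro S hSring hSopt hpS
    -- S ∩ S₀ is also a minimizer containing p
    have hring_inter : ∀ a ∈ Ar, a.1 ∈ S ∩ S₀ → a.2 ∈ S ∩ S₀ := by
      intro a ha h1
      rw [Finset.mem_inter] at h1 ⊢
      exact ⟨hSring a ha h1.1, hS₀ring a ha h1.2⟩
    have hring_union : ∀ a ∈ Ar, a.1 ∈ S ∪ S₀ → a.2 ∈ S ∪ S₀ := by
      intro a ha h1
      rw [Finset.mem_union] at h1 ⊢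
      rcases h1 with h1 | h1
      · exact Or.inl (hSring a ha h1)
      · exact Or.inr (hS₀ring a ha h1)
    have hopt_inter : ∀ T : Finset (Fin n), (∀ a ∈ Ar, a.1 ∈ T → a.2 ∈ T) →
        f (S ∩ S₀) ≤ f T := by
      intro T hT
      have h1 := hsub S S₀
      have h2 : f S ≤ f (S ∪ S₀) := hSopt _ hring_union
      have h3 : f S₀ ≤ f T := hS₀opt T hT
      linarith
    have hp_inter : p ∈ S ∩ S₀ := Finset.mem_inter.2 ⟨hpS, hpS₀⟩
    have hmem_inter : S ∩ S₀ ∈ Finset.univ.filter P :=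
      Finset.mem_filter.2 ⟨Finset.mem_univ _, hring_inter, hopt_inter, hp_inter⟩
    have hcard : S₀.card ≤ (S ∩ S₀).card := hS₀min _ hmem_inter
    have heq : S ∩ S₀ = S₀ :=
      Finset.eq_of_subset_of_card_le Finset.inter_subset_right hcard
    have : q ∈ S ∩ S₀ := by rw [heq]; exact hqS₀
    exact (Finset.mem_inter.1 this).1
  · -- no minimizer contains p : the claim is vacuous once we find q ∉ Rp
    have hRpne : Rp ≠ Finset.univ := by
      intro h
      rw [h] at key
      exact lt_irrefl _ key
    have : ∃ q : Fin n, q ∉ Rp := by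
      by_contra h
      push_neg at h
      exact hRpne (Finset.eq_univ_iff_forall.2 h)
    obtain ⟨q, hq⟩ := this
    exact ⟨q, hq, fun S h1 h2 h3 => absurd ⟨S, h1, h2, h3⟩ hex⟩
end
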